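/- arXiv:2603.23908 — 3 statements merged into one kernel-verified Lean document; each statement's English description precedes it below -/
import Mathlib

section
/- Bernstein inequality in the quasiperiodic direction, H^s version (Lemma 5.1, bound (b1)): Assume s > (d−1)/2. There is a constant C, depending on d, s, k and χ, such that for every dyadic λ = 2^l (l ≥ 0 an integer) and every u ∈ H^s(𝕋^d), ‖P_λ^α u‖_{L^∞(𝕋^d)} ≤ C λ^{d/2−s} ‖u‖_{H^s}. -/
noncomputable section
open scoped BigOperators
open Filter

/-- The frequency lattice `ℤ^d` of the torus `𝕋^d`. -/
abbrev Freq (d : ℕ) := Fin d → ℤ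

/-- A function on `𝕋^d`, represented by its sequence of Fourier coefficients. -/
abbrev Coeffs (d : ℕ) := Freq d → ℂ

variable {d : ℕ}

/-- The pairing `⟨j, k⟩` between a lattice frequency and the frequency vector `k ∈ ℝ^d`. -/
def dotk (k : Fin d → ℝ) (j : Freq d) : ℝ := ∑ i, (j i : ℝ) * k i

/-- The Japanese bracket `⟨j⟩ = (1+|j|²)^{1/2}`. -/
def jb (j : Freq d) : ℝ := Real.sqrt (1 + ∑ i, ((j i : ℝ)) ^ 2)

/-- The entries of `k` are linearly independent over `ℚ` (equivalently, over `ℤ`). -/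
def Indep (k : Fin d → ℝ) : Prop := ∀ j : Freq d, dotk k j = 0 → j = 0

/-- The weight defining the anisotropic Sobolev norm `H^{s,θ}`. -/
def wt (k : Fin d → ℝ) (s θ : ℝ) (j : Freq d) : ℝ :=
  jb j ^ (2 * s) * (1 + (dotk k j) ^ 2) ^ θ

/-- Membership in the anisotropic Sobolev space `H^{s,θ}(𝕋^d)`. -/
def MemSob (k : Fin d → ℝ) (s θ : ℝ) (u : Coeffs d) : Prop :=
  Summable (fun j : Freq d => wt k s θ j * ‖u j‖ ^ 2)

/-- The `H^{s,θ}(𝕋^d)` norm. -/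
def sobNorm (k : Fin d → ℝ) (s θ : ℝ) (u : Coeffs d) : ℝ :=
  Real.sqrt (∑' j : Freq d, wt k s θ j * ‖u j‖ ^ 2)

/-- Membership in the Sobolev space `H^s(𝕋^d)`; `H^0 = L²`. -/
def MemHs (s : ℝ) (u : Coeffs d) : Prop :=
  Summable (fun j : Freq d => jb j ^ (2 * s) * ‖u j‖ ^ 2)

/-- The `H^s(𝕋^d)` norm; for `s = 0` this is the `L²(𝕋^d)` norm (spectrally normalized). -/
def HsNorm (s : ℝ) (u : Coeffs d) : ℝ :=
  Real.sqrt (∑' j : Freq d, jb j ^ (2 * s) * ‖u j‖ ^ 2)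

/-- The value of the function with Fourier coefficients `u` at the point `α ∈ 𝕋^d = ℝ^d/(2πℤ)^d`,
namely `Σ_j û_j e^{i⟨j,α⟩}`. -/
def value (u : Coeffs d) (α : Fin d → ℝ) : ℂ :=
  ∑' j : Freq d, u j * Complex.exp (Complex.I * ((∑ i, (j i : ℝ) * α i : ℝ) : ℂ))

/-- The squared norm of the space `ℋ^σ = H^σ × H^{σ,1/2}`. -/
def HHnormSq (k : Fin d → ℝ) (σ : ℝ) (W R : Coeffs d) : ℝ :=
  HsNorm σ W ^ 2 + sobNorm k σ (1/2) R ^ 2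

/-- The norm of the space `ℋ^σ = H^σ × H^{σ,1/2}`. -/
def HHnorm (k : Fin d → ℝ) (σ : ℝ) (W R : Coeffs d) : ℝ :=
  Real.sqrt (HHnormSq k σ W R)

/-- Membership in `ℋ^σ = H^σ × H^{σ,1/2}`. -/
def MemHH (k : Fin d → ℝ) (σ : ℝ) (W R : Coeffs d) : Prop :=
  MemHs σ W ∧ MemSob k σ (1/2) R

/-- The directional derivative `∂_α = k₁∂₁+⋯+k_d∂_d`, acting on Fourier coefficients
by multiplication by `i⟨j,k⟩`. -/
def dAl (k : Fin d → ℝ) (u : Coeffs d) : Coeffs d :=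
  fun j => Complex.I * (dotk k j : ℝ) * u j

/-- The projection `P`: the Fourier multiplier which is `1` for `⟨j,k⟩ < 0`, `1/2`
at the zero mode, `0` for `⟨j,k⟩ > 0`. -/
def Pp (k : Fin d → ℝ) (u : Coeffs d) : Coeffs d := fun j =>
  if dotk k j < 0 then u j else if dotk k j = 0 then u j / 2 else 0

/-- The complementary projection `P̄ = I - P`. -/
def Pb (k : Fin d → ℝ) (u : Coeffs d) : Coeffs d := u - Pp k u

/-- The Fourier coefficients of the complex conjugate function. -/
def conjC (u : Coeffs d) : Coeffs d := fun j => (starRingEnd ℂ) (u (-j))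

/-- The Fourier coefficients of the product of two functions (convolution). -/
def cmul (u v : Coeffs d) : Coeffs d := fun j => ∑' m : Freq d, u m * v (j - m)

/-- The Fourier coefficients of the constant function `1`. -/
def oneC : Coeffs d := fun j => if j = 0 then 1 else 0

/-- `u` is holomorphic: its Fourier coefficients vanish for `⟨j,k⟩ > 0`. -/
def Holo (k : Fin d → ℝ) (u : Coeffs d) : Prop := ∀ j : Freq d, 0 < dotk k j → u j = 0

/-- The coefficients of `2 Re u`. -/
def twoRe (u : Coeffs d) : Coeffs d := u + conjC u

/-- The coefficients of `2 Im u`. -/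
def twoIm (u : Coeffs d) : Coeffs d := fun j => (u j - conjC u j) / Complex.I

/-- The coefficients of `u²`. -/
def csq (u : Coeffs d) : Coeffs d := cmul u u

/-- The coefficients of `|u|² = u·conj(u)`. -/
def absSqC (u : Coeffs d) : Coeffs d := cmul u (conjC u)

/-- The advection velocity `b := 2 Re P[R(1-conj Y)]`. -/
def bC (k : Fin d → ℝ) (R Y : Coeffs d) : Coeffs d :=
  twoRe (Pp k (cmul R (oneC - conjC Y)))

/-- The frequency shift `a := i(P̄[conj(R)·R_α] - P[R·conj(R)_α])`. -/
def aCf (k : Fin d → ℝ) (R : Coeffs d) : Coeffs d := fun j =>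
  Complex.I * ((Pb k (cmul (conjC R) (dAl k R)) - Pp k (cmul R (dAl k (conjC R)))) j)

/-- The auxiliary function
`M := P̄[conj(R)·Y_α − R_α·conj(Y)] + P[R·conj(Y)_α − conj(R)_α·Y]`. -/
def MCf (k : Fin d → ℝ) (R Y : Coeffs d) : Coeffs d :=
  Pb k (cmul (conjC R) (dAl k Y) - cmul (dAl k R) (conjC Y))
    + Pp k (cmul R (dAl k (conjC Y)) - cmul (dAl k (conjC R)) Y)

/-- `(W,R,Y)` solves the differentiated gravity water wave system on the time interval `I`:
`𝐖_t + b·𝐖_α + (1+𝐖)(1−conj Y)·R_α = (1+𝐖)M` and `R_t + b·R_α = i(Y − a(1−Y))`,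
where `Y = 𝐖/(1+𝐖)` (equivalently `(1+𝐖)·Y = 𝐖`), so that
`(1+𝐖)/(1+conj 𝐖) = (1+𝐖)(1−conj Y)` and `i(𝐖−a)/(1+𝐖) = i(Y − a(1−Y))`. -/
structure IsWWSol (k : Fin d → ℝ) (I : Set ℝ) (W R Y : ℝ → Coeffs d) : Prop where
  holoW : ∀ t ∈ I, Holo k (W t)
  holoR : ∀ t ∈ I, Holo k (R t)
  Ymem : ∀ t ∈ I, MemHs 0 (Y t)
  Ydef : ∀ t ∈ I, cmul (oneC + W t) (Y t) = W t
  eqW : ∀ t ∈ I, ∀ j : Freq d,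
    HasDerivWithinAt (fun τ => W τ j)
      ((cmul (oneC + W t) (MCf k (R t) (Y t))
        - cmul (bC k (R t) (Y t)) (dAl k (W t))
        - cmul (cmul (oneC + W t) (oneC - conjC (Y t))) (dAl k (R t))) j) I t
  eqR : ∀ t ∈ I, ∀ j : Freq d,
    HasDerivWithinAt (fun τ => R τ j)
      ((Complex.I • (Y t - cmul (aCf k (R t)) (oneC - Y t))
        - cmul (bC k (R t) (Y t)) (dAl k (R t))) j) I t

/-- The Littlewood–Paley projection `P_λ^α` at dyadic frequency `λ = 2^l`, adapted to the
quasiperiodic direction: for `l ≥ 1` the Fourier multiplier `j ↦ φ(2^{-l}⟨j,k⟩)` with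
`φ(ξ) = χ(ξ) - χ(2ξ)`, and for `l = 0` the multiplier `j ↦ χ(⟨j,k⟩)`. -/
def LPproj (k : Fin d → ℝ) (χ : ℝ → ℝ) (l : ℕ) (u : Coeffs d) : Coeffs d :=
  fun j =>
    if l = 0 then ((χ (dotk k j) : ℝ) : ℂ) * u j
    else (((χ ((2:ℝ) ^ (-(l:ℝ)) * dotk k j) - χ ((2:ℝ) ^ (-(l:ℝ) + 1) * dotk k j) : ℝ)) : ℂ) * u j
namespace BernsteinAux

open Finset

lemma jb_ge_one (j : Freq d) : 1 ≤ jb j := by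
  have h : 0 ≤ ∑ i, ((j i : ℝ)) ^ 2 := Finset.sum_nonneg fun i _ => sq_nonneg _
  have : (1:ℝ) = Real.sqrt 1 := by simp
  rw [this, jb]
  exact Real.sqrt_le_sqrt (by linarith)

lemma jb_pos (j : Freq d) : 0 < jb j := lt_of_lt_of_le one_pos (jb_ge_one j)

lemma abs_coord_le (j : Freq d) (i : Fin d) : |(j i : ℝ)| ≤ jb j := by
  have h1 : ((j i : ℝ)) ^ 2 ≤ 1 + ∑ i', ((j i' : ℝ)) ^ 2 := by
    have := Finset.single_le_sum (f := fun i' => ((j i' : ℝ)) ^ 2)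
      (fun i' _ => sq_nonneg _) (Finset.mem_univ i)
    linarith
  calc |(j i : ℝ)| = Real.sqrt (((j i : ℝ)) ^ 2) := (Real.sqrt_sq_eq_abs _).symm
    _ ≤ jb j := Real.sqrt_le_sqrt h1

lemma dotk_abs_le (k : Fin d → ℝ) (j : Freq d) :
    |dotk k j| ≤ (∑ i, |k i|) * jb j := by
  rw [dotk]
  calc |∑ i, (j i : ℝ) * k i| ≤ ∑ i, |(j i : ℝ) * k i| := Finset.abs_sum_le_sum_abs _ _
    _ ≤ ∑ i, jb j * |k i| := by
        refine Finset.sum_le_sum fun i _ => ?_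
        rw [abs_mul]
        exact mul_le_mul_of_nonneg_right (abs_coord_le j i) (abs_nonneg _)
    _ = (∑ i, |k i|) * jb j := by rw [← Finset.mul_sum, mul_comm]

lemma pow_rpow_comm (x : ℝ) (hx : 0 < x) (p : ℕ) (e : ℝ) :
    ((x ^ p : ℝ)) ^ e = (x ^ e) ^ p := by
  rw [← Real.rpow_natCast x p, ← Real.rpow_mul hx.le, mul_comm,
    Real.rpow_mul hx.le, Real.rpow_natCast]

lemma rpow_nat_sub_one (A : ℝ) (hA : 0 < A) (d : ℕ) (hd : 1 ≤ d) :
    (A : ℝ) ^ (d - 1 : ℕ) = A ^ (((d : ℝ) - 1)) := by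
  rw [← Real.rpow_natCast A (d - 1)]
  congr 1
  rw [Nat.cast_sub hd, Nat.cast_one]

/-- Key counting estimate: the sum of `⟨j⟩^{-2s}` over frequencies in the dyadic
region `|⟨j,k⟩| ≤ 2λ`, `⟨j⟩ ≥ cλ` is `O(λ^{d-2s})`. -/
lemma key_count (d : ℕ) (hd : 1 ≤ d) (k : Fin d → ℝ) (i₀ : Fin d) (hK : k i₀ ≠ 0)
    (s c : ℝ) (hs2 : (d : ℝ) - 1 < 2 * s) (hc : 0 < c) :
    ∃ C : ℝ, 0 < C ∧ ∀ lam : ℝ, 1 ≤ lam →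
      ∀ F : Finset (Freq d), (∀ j ∈ F, |dotk k j| ≤ 2 * lam ∧ c * lam ≤ jb j) →
      ∑ j ∈ F, (jb j) ^ (-(2 * s)) ≤ C * lam ^ ((d : ℝ) - 2 * s) := by
  classical
  set K := |k i₀| with hKdef
  have hKpos : 0 < K := abs_pos.mpr hK
  have hs0 : (0:ℝ) ≤ 2 * s := by
    have : (0:ℝ) ≤ (d:ℝ) - 1 := by
      have : (1:ℝ) ≤ (d:ℝ) := by exact_mod_cast hd
      linarith
    linarith
  set r : ℝ := (2:ℝ) ^ ((d:ℝ) - 1 - 2*s) with hrdef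
  have hr0 : 0 ≤ r := (Real.rpow_pos_of_pos two_pos _).le
  have hr1 : r < 1 := Real.rpow_lt_one_of_one_lt_of_neg one_lt_two (by linarith)
  have hr1' : 0 < 1 - r := by linarith
  set C₁ : ℝ := (4/K + 1) * (6*c)^(d-1) * c ^ (-(2*s)) with hC1def
  have hC₁ : 0 < C₁ := by positivity
  refine ⟨C₁ * (1 - r)⁻¹, by positivity, ?_⟩
  intro lam hlam F hF
  have hlam0 : (0:ℝ) < lam := lt_of_lt_of_le one_pos hlam
  set pf : Freq d → ℕ := fun j => (⌊Real.logb 2 (jb j / (c*lam))⌋).toNat with hpf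
  have hclam : 0 < c * lam := by positivity
  have hshell : ∀ j ∈ F, c*lam * 2^(pf j) ≤ jb j ∧ jb j < c*lam * 2^(pf j + 1) := by
    intro j hj
    have h1 : 1 ≤ jb j / (c*lam) := (one_le_div hclam).mpr (hF j hj).2
    have hq0 : 0 < jb j / (c*lam) := lt_of_lt_of_le one_pos h1
    set x := Real.logb 2 (jb j / (c*lam)) with hx
    have hx0 : 0 ≤ x := Real.logb_nonneg one_lt_two h1
    have hcast : ((pf j : ℕ) : ℝ) = ((⌊x⌋ : ℤ) : ℝ) := by
      rw [hpf]
      simp only []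
      rw [← hx]
      exact_mod_cast congrArg (fun z : ℤ => (z : ℝ))
        (Int.toNat_of_nonneg (Int.floor_nonneg.mpr hx0))
    have hfl : ((pf j : ℝ)) ≤ x := by
      rw [hcast]; exact Int.floor_le x
    have hfl2 : x < (pf j : ℝ) + 1 := by
      rw [hcast]; exact Int.lt_floor_add_one x
    have h2x : (2:ℝ) ^ x = jb j / (c*lam) := Real.rpow_logb two_pos (by norm_num) hq0
    constructor
    · have h3 : (2:ℝ)^((pf j : ℝ)) ≤ 2^x := Real.rpow_le_rpow_of_exponent_le one_le_two hfl
      rw [Real.rpow_natCast, h2x] at h3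
      have := (le_div_iff₀ hclam).mp h3
      linarith
    · have h3 : (2:ℝ)^x < 2^(((pf j : ℕ) + 1 : ℕ) : ℝ) := by
        apply Real.rpow_lt_rpow_of_exponent_lt one_lt_two
        push_cast
        exact hfl2
      rw [Real.rpow_natCast, h2x] at h3
      have := (div_lt_iff₀ hclam).mp h3
      linarith
  set P := F.sup pf with hP
  have hmaps : ∀ j ∈ F, pf j ∈ Finset.range (P+1) := fun j hj =>
    Finset.mem_range.mpr (Nat.lt_succ_of_le (Finset.le_sup hj))
  rw [← Finset.sum_fiberwise_of_maps_to hmaps]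
  have hpershell : ∀ p ∈ Finset.range (P+1),
      ∑ j ∈ F.filter (fun j => pf j = p), jb j ^ (-(2*s)) ≤
        C₁ * lam ^ ((d:ℝ) - 2*s) * r ^ p := by
    intro p _
    rcases (F.filter (fun j => pf j = p)).eq_empty_or_nonempty with he | hne
    · rw [he, Finset.sum_empty]
      positivity
    · set Fp := F.filter (fun j => pf j = p) with hFp
      set L : ℝ := c * lam * 2^p with hLdef
      have hL0 : 0 < L := by positivity
      set T : ℝ := c * lam * 2^(p+1) with hTdef
      have hT0 : 0 < T := by positivity
      have hmemFp : ∀ j ∈ Fp, j ∈ F ∧ pf j = p := fun j hj => by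
        simpa [hFp, Finset.mem_filter] using hj
      have hjlow : ∀ j ∈ Fp, L ≤ jb j := by
        intro j hj
        obtain ⟨hjF, hpj⟩ := hmemFp j hj
        have := (hshell j hjF).1
        rwa [hpj] at this
      have hjhigh : ∀ j ∈ Fp, jb j < T := by
        intro j hj
        obtain ⟨hjF, hpj⟩ := hmemFp j hj
        have := (hshell j hjF).2
        rwa [hpj] at this
      have hT1 : 1 ≤ T := by
        obtain ⟨j₀, hj₀⟩ := hne
        exact le_of_lt (lt_of_le_of_lt (jb_ge_one j₀) (hjhigh j₀ hj₀))
      set M : ℤ := ⌊T⌋ with hM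
      have hM0 : 0 ≤ M := Int.floor_nonneg.mpr hT0.le
      set box := Fintype.piFinset (fun _ : {i : Fin d // i ≠ i₀} => Finset.Icc (-M) M)
        with hbox
      set NA : ℕ := (⌊4*lam/K⌋).toNat + 1 with hNA
      -- counting : card of each fiber over the tail map is at most NA
      have hfiber : ∀ t ∈ box,
          (Fp.filter (fun j => (fun i : {i : Fin d // i ≠ i₀} => j i.1) = t)).card ≤ NA := by
        intro t _
        set fib := Fp.filter (fun j => (fun i : {i : Fin d // i ≠ i₀} => j i.1) = t) with hfib
        have hinj : Set.InjOn (fun j : Freq d => j i₀) fib := by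
          intro a ha b hb hab
          simp only [hfib, Finset.coe_filter, Set.mem_setOf_eq] at ha hb
          funext i
          by_cases hi : i = i₀
          · subst hi; exact hab
          · have h1 : a i = t ⟨i, hi⟩ := congrFun ha.2 ⟨i, hi⟩
            have h2 : b i = t ⟨i, hi⟩ := congrFun hb.2 ⟨i, hi⟩
            rw [h1, h2]
        rcases fib.eq_empty_or_nonempty with hfe | hfne
        · rw [hfe]; simp
        · set img := fib.image (fun j => j i₀) with himg
          have himgne : img.Nonempty := hfne.image _
          have hcardeq : img.card = fib.card := Finset.card_image_of_injOn hinj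
          set nmin := img.min' himgne with hnmin
          set nmax := img.max' himgne with hnmax
          have hsub : img ⊆ Finset.Icc nmin nmax := by
            intro n hn
            exact Finset.mem_Icc.mpr ⟨Finset.min'_le _ _ hn, Finset.le_max' _ _ hn⟩
          have hdiff : ((nmax - nmin : ℤ) : ℝ) * K ≤ 4 * lam := by
            obtain ⟨ja, hja, hjaeq⟩ := Finset.mem_image.mp (img.max'_mem himgne)
            obtain ⟨jc, hjc, hjceq⟩ := Finset.mem_image.mp (img.min'_mem himgne)
            have hjaF : ja ∈ F := (hmemFp ja ((Finset.filter_subset _ _) hja)).1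
            have hjcF : jc ∈ F := (hmemFp jc ((Finset.filter_subset _ _) hjc)).1
            have hta : (fun i : {i : Fin d // i ≠ i₀} => ja i.1) = t :=
              (Finset.mem_filter.mp hja).2
            have htc : (fun i : {i : Fin d // i ≠ i₀} => jc i.1) = t :=
              (Finset.mem_filter.mp hjc).2
            have hdot : dotk k ja - dotk k jc = ((ja i₀ - jc i₀ : ℤ) : ℝ) * k i₀ := by
              rw [dotk, dotk, ← Finset.sum_sub_distrib]
              rw [Finset.sum_eq_single i₀]
              · push_cast; ring
              · intro i _ hi
                have h1 : ja i = t ⟨i, hi⟩ := congrFun hta ⟨i, hi⟩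
                have h2 : jc i = t ⟨i, hi⟩ := congrFun htc ⟨i, hi⟩
                rw [h1, h2]; ring
              · intro h; exact absurd (Finset.mem_univ i₀) h
            have hb1 : |dotk k ja| ≤ 2 * lam := (hF ja hjaF).1
            have hb2 : |dotk k jc| ≤ 2 * lam := (hF jc hjcF).1
            have habs2 : |((ja i₀ - jc i₀ : ℤ) : ℝ)| * K ≤ 4 * lam := by
              rw [hKdef, ← abs_mul, ← hdot]
              calc |dotk k ja - dotk k jc| ≤ |dotk k ja| + |dotk k jc| := abs_sub _ _
                _ ≤ 4 * lam := by linarith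
            have hge : ((nmax - nmin : ℤ) : ℝ) ≤ |((ja i₀ - jc i₀ : ℤ) : ℝ)| := by
              have heq : nmax - nmin = ja i₀ - jc i₀ := by
                rw [hnmax, hnmin, ← hjaeq, ← hjceq]
              rw [heq]
              exact le_abs_self _
            calc ((nmax - nmin : ℤ) : ℝ) * K ≤ |((ja i₀ - jc i₀ : ℤ) : ℝ)| * K :=
                  mul_le_mul_of_nonneg_right hge hKpos.le
              _ ≤ 4 * lam := habs2
          have hint : nmax - nmin ≤ ⌊4*lam/K⌋ := by
            apply Int.le_floor.mpr
            rw [le_div_iff₀ hKpos]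
            exact_mod_cast hdiff
          calc fib.card = img.card := hcardeq.symm
            _ ≤ (Finset.Icc nmin nmax).card := Finset.card_le_card hsub
            _ = (nmax + 1 - nmin).toNat := Int.card_Icc _ _
            _ ≤ NA := by
                rw [hNA]
                have h1 : nmax + 1 - nmin ≤ ⌊4*lam/K⌋ + 1 := by linarith
                have h2 : (nmax + 1 - nmin).toNat ≤ (⌊4*lam/K⌋ + 1).toNat :=
                  Int.toNat_le_toNat h1
                have h3 : (⌊4*lam/K⌋ + 1).toNat ≤ ⌊4*lam/K⌋.toNat + 1 := by omega
                omega
      have hmaps2 : ∀ j ∈ Fp, (fun i : {i : Fin d // i ≠ i₀} => j i.1) ∈ box := by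
        intro j hj
        rw [hbox, Fintype.mem_piFinset]
        intro i
        rw [Finset.mem_Icc]
        have habs : |(j i.1 : ℝ)| ≤ jb j := abs_coord_le j i.1
        have hjT : jb j < T := hjhigh j hj
        have habs' : |(j i.1 : ℝ)| ≤ T := le_of_lt (lt_of_le_of_lt habs hjT)
        obtain ⟨hlo, hhi⟩ := abs_le.mp habs'
        constructor
        · rw [neg_le, hM]
          apply Int.le_floor.mpr
          push_cast
          linarith
        · rw [hM]
          apply Int.le_floor.mpr
          exact hhi
      have hcard : Fp.card ≤ box.card * NA := by
        rw [Finset.card_eq_sum_card_fiberwise hmaps2]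
        calc (∑ t ∈ box, (Fp.filter (fun j => (fun i : {i : Fin d // i ≠ i₀} => j i.1) = t)).card)
            ≤ ∑ _t ∈ box, NA := Finset.sum_le_sum hfiber
          _ = box.card * NA := by rw [Finset.sum_const, smul_eq_mul]
      -- real bound on box.card
      have hboxcard : (box.card : ℝ) ≤ (3*T)^(d-1) := by
        have hcardsub : Fintype.card {i : Fin d // i ≠ i₀} = d - 1 := by
          simp [Fintype.card_subtype_compl]
        have : box.card = ((Finset.Icc (-M) M).card)^(d-1) := by
          rw [hbox, Fintype.card_piFinset, Finset.prod_const, Finset.card_univ, hcardsub]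
        rw [this]
        have hIcc : ((Finset.Icc (-M) M).card : ℝ) ≤ 3*T := by
          rw [Int.card_Icc]
          have h1 : (M + 1 - -M).toNat = (2*M+1).toNat := by congr 1; ring
          rw [h1]
          have h2 : ((2*M+1).toNat : ℝ) = ((2*M+1 : ℤ) : ℝ) := by
            exact_mod_cast congrArg (fun z : ℤ => (z : ℝ))
              (Int.toNat_of_nonneg (by linarith : (0:ℤ) ≤ 2*M+1))
          rw [h2]
          push_cast
          have hMT : (M : ℝ) ≤ T := Int.floor_le T
          linarith
        push_cast
        exact pow_le_pow_left₀ (by positivity) hIcc _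
      have hNAcard : (NA : ℝ) ≤ (4/K + 1) * lam := by
        rw [hNA]
        push_cast
        have h1 : ((⌊4*lam/K⌋.toNat : ℤ) : ℝ) ≤ 4*lam/K := by
          rw [Int.toNat_of_nonneg (Int.floor_nonneg.mpr (by positivity))]
          exact Int.floor_le _
        have h3 : (1:ℝ) ≤ lam := hlam
        push_cast at h1
        have h2' : (4/K + 1) * lam = 4*lam/K + lam := by ring
        rw [h2']
        linarith
      -- sum over the shell
      have hsum1 : ∑ j ∈ Fp, jb j ^ (-(2*s)) ≤ (Fp.card : ℝ) * L ^ (-(2*s)) := by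
        have := Finset.sum_le_card_nsmul Fp (fun j => jb j ^ (-(2*s))) (L ^ (-(2*s)))
          (fun j hj => Real.rpow_le_rpow_of_nonpos hL0 (hjlow j hj) (by linarith))
        rwa [nsmul_eq_mul] at this
      have hcardR : (Fp.card : ℝ) ≤ (3*T)^(d-1) * ((4/K + 1) * lam) := by
        calc (Fp.card : ℝ) ≤ (box.card : ℝ) * (NA : ℝ) := by exact_mod_cast hcard
          _ ≤ (3*T)^(d-1) * ((4/K + 1) * lam) := by
              apply mul_le_mul hboxcard hNAcard (by positivity) (by positivity)
      have hLpos : (0:ℝ) < L ^ (-(2*s)) := Real.rpow_pos_of_pos hL0 _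
      have hmain : (3*T)^(d-1) * ((4/K + 1) * lam) * L ^ (-(2*s))
          = C₁ * lam ^ ((d:ℝ) - 2*s) * r ^ p := by
        have hμ : (0:ℝ) < lam * 2^p := by positivity
        have e0 : 3*T = 6*c*(lam*2^p) := by rw [hTdef]; ring
        have e0' : L = c*(lam*2^p) := by rw [hLdef]; ring
        rw [e0, e0', mul_pow, Real.mul_rpow hc.le hμ.le, mul_pow]
        have key : (lam*2^p)^(d-1:ℕ) * (lam*2^p)^(-(2*s)) * lam
            = lam ^ ((d:ℝ)-2*s) * r^p := by
          rw [rpow_nat_sub_one _ hμ d hd, ← Real.rpow_add hμ]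
          rw [show (d:ℝ) - 1 + -(2*s) = (d:ℝ)-1-2*s by ring]
          rw [Real.mul_rpow hlam0.le (by positivity : (0:ℝ) ≤ (2:ℝ)^p)]
          rw [pow_rpow_comm 2 two_pos p ((d:ℝ)-1-2*s), ← hrdef]
          rw [mul_right_comm]
          congr 1
          nth_rewrite 2 [← Real.rpow_one lam]
          rw [← Real.rpow_add hlam0]
          congr 1
          ring
        calc 6^(d-1) * c^(d-1) * (lam*2^p)^(d-1) * ((4/K+1)*lam) *
              (c^(-(2*s)) * (lam*2^p)^(-(2*s)))
            = (6^(d-1)*c^(d-1)) * (4/K+1) * c^(-(2*s)) *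
              ((lam*2^p)^(d-1:ℕ) * (lam*2^p)^(-(2*s)) * lam) := by ring
          _ = (6^(d-1)*c^(d-1)) * (4/K+1) * c^(-(2*s)) * (lam^((d:ℝ)-2*s) * r^p) := by
              rw [key]
          _ = C₁ * lam ^ ((d:ℝ)-2*s) * r ^ p := by rw [hC1def, mul_pow]; ring
      calc ∑ j ∈ Fp, jb j ^ (-(2*s)) ≤ (Fp.card : ℝ) * L ^ (-(2*s)) := hsum1
        _ ≤ (3*T)^(d-1) * ((4/K + 1) * lam) * L ^ (-(2*s)) :=
            mul_le_mul_of_nonneg_right hcardR hLpos.le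
        _ = C₁ * lam ^ ((d:ℝ) - 2*s) * r ^ p := hmain
  calc (∑ p ∈ Finset.range (P+1), ∑ j ∈ F.filter (fun j => pf j = p), jb j ^ (-(2*s)))
      ≤ ∑ p ∈ Finset.range (P+1), C₁ * lam ^ ((d:ℝ) - 2*s) * r ^ p :=
        Finset.sum_le_sum hpershell
    _ = C₁ * lam ^ ((d:ℝ) - 2*s) * ∑ p ∈ Finset.range (P+1), r ^ p := by
        rw [Finset.mul_sum]
    _ ≤ C₁ * lam ^ ((d:ℝ) - 2*s) * (1-r)⁻¹ := by
        apply mul_le_mul_of_nonneg_left _ (by positivity)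
        calc ∑ p ∈ Finset.range (P+1), r ^ p ≤ ∑' p : ℕ, r ^ p :=
              Summable.sum_le_tsum _ (fun p _ => pow_nonneg hr0 p)
                (summable_geometric_of_lt_one hr0 hr1)
          _ = (1-r)⁻¹ := tsum_geometric_of_lt_one hr0 hr1
    _ = C₁ * (1-r)⁻¹ * lam ^ ((d:ℝ) - 2*s) := by ring

end BernsteinAux

/-- **Lemma 5.1, bound (b1) (Bernstein inequality, `H^s` version).** Assume
`s > (d-1)/2`. There is a constant `C = C(d,s,k,χ)` such that for every dyadic
`λ = 2^l` and every `u ∈ H^s(𝕋^d)`,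
`‖P_λ^α u‖_{L^∞(𝕋^d)} ≤ C λ^{d/2-s} ‖u‖_{H^s}`. -/
theorem bernstein_Hs
    (d : ℕ) (hd : 1 ≤ d) (k : Fin d → ℝ) (hk : Indep k)
    (s : ℝ) (hs : ((d : ℝ) - 1) / 2 < s)
    (χ : ℝ → ℝ) (hχsmooth : ContDiff ℝ (⊤ : ℕ∞) χ) (hχsupp : HasCompactSupport χ)
    (hχone : ∀ ξ : ℝ, |ξ| ≤ 1 → χ ξ = 1) (hχzero : ∀ ξ : ℝ, 2 ≤ |ξ| → χ ξ = 0) :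
    ∃ C : ℝ, 0 < C ∧
      ∀ l : ℕ, ∀ u : Coeffs d, MemHs s u →
        ∀ α : Fin d → ℝ,
          ‖value (LPproj k χ l u) α‖ ≤ C * ((2:ℝ) ^ l) ^ ((d : ℝ) / 2 - s) * HsNorm s u := by
  classical
  open BernsteinAux in
  -- some coordinate of `k` is nonzero
  obtain ⟨i₀, hi₀⟩ : ∃ i, k i ≠ 0 := by
    by_contra h
    push_neg at h
    have h1 := hk (fun _ => 1) (by simp [dotk, h])
    have := congrFun h1 ⟨0, hd⟩
    simp at this
  set B : ℝ := ∑ i, |k i| with hBdef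
  have hB : 0 < B := by
    have h1 : |k i₀| ≤ B :=
      Finset.single_le_sum (f := fun i => |k i|) (fun i _ => abs_nonneg _)
        (Finset.mem_univ i₀)
    have h2 : 0 < |k i₀| := abs_pos.mpr hi₀
    linarith
  set c : ℝ := min 1 (1/(2*B)) with hcdef
  have hc : 0 < c := lt_min one_pos (by positivity)
  have hc1 : c ≤ 1 := min_le_left _ _
  have hc2 : c ≤ 1/(2*B) := min_le_right _ _
  -- bound for χ
  obtain ⟨M0, hM0⟩ := hχsmooth.continuous.bounded_above_of_compact_support hχsupp
  set Mχ : ℝ := max M0 1 with hMχdef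
  have hMχ1 : (1:ℝ) ≤ Mχ := le_max_right _ _
  have hMχ0 : (0:ℝ) < Mχ := lt_of_lt_of_le one_pos hMχ1
  have hMχ : ∀ x : ℝ, |χ x| ≤ Mχ := fun x =>
    le_trans (by simpa using hM0 x) (le_max_left _ _)
  have hs2 : (d : ℝ) - 1 < 2 * s := by linarith
  obtain ⟨C₀, hC₀pos, hC₀⟩ := key_count d hd k i₀ hi₀ s c hs2 hc
  have hs0 : (0:ℝ) ≤ 2 * s := by
    have : (1:ℝ) ≤ (d:ℝ) := by exact_mod_cast hd
    linarith
  refine ⟨2 * Mχ * Real.sqrt C₀, by positivity, ?_⟩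
  intro l u hu α
  set lam : ℝ := (2:ℝ)^l with hlamdef
  have hlam0 : (0:ℝ) < lam := by positivity
  have hlam1 : (1:ℝ) ≤ lam := by
    rw [hlamdef]
    calc (1:ℝ) = 1^l := (one_pow l).symm
      _ ≤ 2^l := pow_le_pow_left₀ (by norm_num) (by norm_num) l
  -- the multiplier
  set m : Freq d → ℝ := fun j =>
    if l = 0 then χ (dotk k j)
    else χ ((2:ℝ) ^ (-(l:ℝ)) * dotk k j) - χ ((2:ℝ) ^ (-(l:ℝ) + 1) * dotk k j) with hmdef
  have hLP : ∀ j, LPproj k χ l u j = ((m j : ℝ) : ℂ) * u j := by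
    intro j
    simp only [LPproj, hmdef]
    split_ifs <;> simp
  have hm_bd : ∀ j, |m j| ≤ 2 * Mχ := by
    intro j
    simp only [hmdef]
    split_ifs
    · calc |χ (dotk k j)| ≤ Mχ := hMχ _
        _ ≤ 2 * Mχ := by linarith
    · calc |χ ((2:ℝ) ^ (-(l:ℝ)) * dotk k j) - χ ((2:ℝ) ^ (-(l:ℝ) + 1) * dotk k j)|
          ≤ |χ ((2:ℝ) ^ (-(l:ℝ)) * dotk k j)| + |χ ((2:ℝ) ^ (-(l:ℝ) + 1) * dotk k j)| :=
            abs_sub _ _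
        _ ≤ 2 * Mχ := by
            have := hMχ ((2:ℝ) ^ (-(l:ℝ)) * dotk k j)
            have := hMχ ((2:ℝ) ^ (-(l:ℝ) + 1) * dotk k j)
            linarith
  -- support of the multiplier
  have hrlam : (2:ℝ) ^ (-(l:ℝ)) = lam⁻¹ := by
    rw [Real.rpow_neg (by norm_num), Real.rpow_natCast, hlamdef]
  have hrlam2 : (2:ℝ) ^ (-(l:ℝ) + 1) = 2 * lam⁻¹ := by
    rw [Real.rpow_add (by norm_num), Real.rpow_one, hrlam]
    ring
  have hSupp : ∀ j, m j ≠ 0 → |dotk k j| ≤ 2 * lam ∧ c * lam ≤ jb j := by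
    intro j hmj
    simp only [hmdef] at hmj
    by_cases hl : l = 0
    · rw [if_pos hl] at hmj
      have hlam_eq : lam = 1 := by rw [hlamdef, hl, pow_zero]
      constructor
      · by_contra habs
        push_neg at habs
        exact hmj (hχzero _ (by rw [hlam_eq] at habs; linarith))
      · rw [hlam_eq, mul_one]
        exact le_trans hc1 (jb_ge_one j)
    · rw [if_neg hl] at hmj
      set x := dotk k j with hx
      have hb1 : |x| ≤ 2 * lam := by
        by_contra habs
        push_neg at habs
        have h1 : χ ((2:ℝ) ^ (-(l:ℝ)) * x) = 0 := by
          apply hχzero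
          rw [hrlam, abs_mul, abs_of_pos (by positivity : (0:ℝ) < lam⁻¹)]
          rw [le_inv_mul_iff₀ hlam0]
          linarith
        have h2 : χ ((2:ℝ) ^ (-(l:ℝ) + 1) * x) = 0 := by
          apply hχzero
          rw [hrlam2, mul_assoc, abs_mul, abs_mul]
          rw [abs_of_pos (by positivity : (0:ℝ) < lam⁻¹)]
          have : (2:ℝ) ≤ lam⁻¹ * |x| := by
            rw [le_inv_mul_iff₀ hlam0]; linarith
          calc (2:ℝ) ≤ lam⁻¹ * |x| := this
            _ ≤ |(2:ℝ)| * (lam⁻¹ * |x|) := by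
                rw [abs_two]
                nlinarith [abs_nonneg x, inv_nonneg.mpr hlam0.le]
        rw [h1, h2, sub_zero] at hmj
        exact hmj rfl
      have hb2 : lam / 2 ≤ |x| := by
        by_contra habs
        push_neg at habs
        have h1 : χ ((2:ℝ) ^ (-(l:ℝ)) * x) = 1 := by
          apply hχone
          rw [hrlam, abs_mul, abs_of_pos (by positivity : (0:ℝ) < lam⁻¹)]
          rw [inv_mul_le_iff₀ hlam0]
          linarith
        have h2 : χ ((2:ℝ) ^ (-(l:ℝ) + 1) * x) = 1 := by
          apply hχone
          rw [hrlam2, mul_assoc, abs_mul, abs_two]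
          rw [abs_mul, abs_of_pos (by positivity : (0:ℝ) < lam⁻¹)]
          have h5 : lam⁻¹ * |x| ≤ 1/2 := by
            rw [inv_mul_le_iff₀ hlam0]
            linarith
          linarith
        rw [h1, h2, sub_self] at hmj
        exact hmj rfl
      refine ⟨hb1, ?_⟩
      have h3 : |x| ≤ B * jb j := by rw [hx, hBdef]; exact dotk_abs_le k j
      have h4 : lam / 2 ≤ B * jb j := le_trans hb2 h3
      calc c * lam ≤ 1/(2*B) * lam := mul_le_mul_of_nonneg_right hc2 hlam0.le
        _ ≤ jb j := by
            rw [div_mul_eq_mul_div, one_mul, div_le_iff₀ (by positivity)]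
            nlinarith
  -- the weight functions
  set g : Freq d → ℝ := fun j =>
    if |dotk k j| ≤ 2 * lam ∧ c * lam ≤ jb j then (jb j) ^ (-(2*s)) else 0 with hgdef
  have hg_nonneg : ∀ j, 0 ≤ g j := by
    intro j
    simp only [hgdef]
    split_ifs
    · exact (Real.rpow_pos_of_pos (jb_pos j) _).le
    · exact le_refl 0
  set X : ℝ := C₀ * lam ^ ((d:ℝ) - 2*s) with hXdef
  have hX0 : 0 ≤ X := by positivity
  have hgsum : ∀ F : Finset (Freq d), ∑ j ∈ F, g j ≤ X := by
    intro F
    simp only [hgdef]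
    rw [← Finset.sum_filter]
    apply hC₀ lam hlam1
    intro j hj
    exact (Finset.mem_filter.mp hj).2
  set h : Freq d → ℝ := fun j => jb j ^ (2*s) * ‖u j‖^2 with hhdef
  have hh_nonneg : ∀ j, 0 ≤ h j := fun j => by
    simp only [hhdef]
    exact mul_nonneg (Real.rpow_pos_of_pos (jb_pos j) _).le (sq_nonneg _)
  have hh_sum : Summable h := hu
  set Y : ℝ := ∑' j, h j with hYdef
  have hY0 : 0 ≤ Y := tsum_nonneg hh_nonneg
  -- pointwise bound
  have hsq : ∀ j, Real.sqrt (g j) * Real.sqrt (h j) =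
      (if |dotk k j| ≤ 2 * lam ∧ c * lam ≤ jb j then (1:ℝ) else 0) * ‖u j‖ := by
    intro j
    simp only [hgdef, hhdef]
    split_ifs with hcond
    · have hjb := jb_pos j
      have e1 : Real.sqrt ((jb j) ^ (-(2*s))) = jb j ^ (-s) := by
        rw [show -(2*s) = -s + -s by ring, Real.rpow_add hjb]
        exact Real.sqrt_mul_self (Real.rpow_pos_of_pos hjb _).le
      have e2 : Real.sqrt (jb j ^ (2*s) * ‖u j‖^2) = jb j ^ s * ‖u j‖ := by
        rw [Real.sqrt_mul (Real.rpow_pos_of_pos hjb _).le, Real.sqrt_sq (norm_nonneg _)]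
        congr 1
        rw [show 2*s = s + s by ring, Real.rpow_add hjb]
        exact Real.sqrt_mul_self (Real.rpow_pos_of_pos hjb _).le
      rw [e1, e2, one_mul, ← mul_assoc, ← Real.rpow_add hjb]
      simp
    · simp
  have hpt : ∀ j, ‖LPproj k χ l u j *
      Complex.exp (Complex.I * ((∑ i, (j i : ℝ) * α i : ℝ) : ℂ))‖ ≤
      2 * Mχ * (Real.sqrt (g j) * Real.sqrt (h j)) := by
    intro j
    rw [hLP j]
    rw [norm_mul, norm_mul]
    have hexp : ‖Complex.exp (Complex.I * ((∑ i, (j i : ℝ) * α i : ℝ) : ℂ))‖ = 1 := by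
      rw [mul_comm]
      exact Complex.norm_exp_ofReal_mul_I _
    rw [hexp, mul_one, Complex.norm_real, Real.norm_eq_abs]
    rw [hsq j]
    by_cases hcond : |dotk k j| ≤ 2 * lam ∧ c * lam ≤ jb j
    · rw [if_pos hcond, one_mul]
      exact mul_le_mul_of_nonneg_right (hm_bd j) (norm_nonneg _)
    · have hm0 : m j = 0 := by
        by_contra hmj
        exact hcond (hSupp j hmj)
      rw [hm0, if_neg hcond]
      simp
  -- Cauchy-Schwarz for the series
  set q : Freq d → ℝ := fun j => Real.sqrt (g j) * Real.sqrt (h j) with hqdef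
  have hq_nonneg : ∀ j, 0 ≤ q j := fun j =>
    mul_nonneg (Real.sqrt_nonneg _) (Real.sqrt_nonneg _)
  have hq_fin : ∀ F : Finset (Freq d), ∑ j ∈ F, q j ≤ Real.sqrt X * Real.sqrt Y := by
    intro F
    have hCS : (∑ j ∈ F, q j)^2 ≤ (∑ j ∈ F, g j) * (∑ j ∈ F, h j) := by
      apply Finset.sum_sq_le_sum_mul_sum_of_sq_eq_mul F
        (fun j _ => hg_nonneg j) (fun j _ => hh_nonneg j)
      intro j _
      rw [hqdef]
      simp only []
      rw [mul_pow, Real.sq_sqrt (hg_nonneg j), Real.sq_sqrt (hh_nonneg j)]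
    have h1 : (∑ j ∈ F, g j) * (∑ j ∈ F, h j) ≤ X * Y := by
      apply mul_le_mul (hgsum F) (Summable.sum_le_tsum F (fun j _ => hh_nonneg j) hh_sum)
        (Finset.sum_nonneg (fun j _ => hh_nonneg j))
        hX0
    calc ∑ j ∈ F, q j = Real.sqrt ((∑ j ∈ F, q j)^2) :=
          (Real.sqrt_sq (Finset.sum_nonneg fun j _ => hq_nonneg j)).symm
      _ ≤ Real.sqrt (X * Y) := Real.sqrt_le_sqrt (le_trans hCS h1)
      _ = Real.sqrt X * Real.sqrt Y := Real.sqrt_mul hX0 _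
  have hq_summable : Summable q := summable_of_sum_le hq_nonneg hq_fin
  have hq_tsum : ∑' j, q j ≤ Real.sqrt X * Real.sqrt Y :=
    Summable.tsum_le_of_sum_le hq_summable hq_fin
  -- assemble
  have hnorm_summable : Summable (fun j => ‖LPproj k χ l u j *
      Complex.exp (Complex.I * ((∑ i, (j i : ℝ) * α i : ℝ) : ℂ))‖) := by
    apply Summable.of_nonneg_of_le (fun j => norm_nonneg _) hpt
    exact (hq_summable.mul_left (2 * Mχ))
  calc ‖value (LPproj k χ l u) α‖
      ≤ ∑' j, ‖LPproj k χ l u j *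
          Complex.exp (Complex.I * ((∑ i, (j i : ℝ) * α i : ℝ) : ℂ))‖ :=
        norm_tsum_le_tsum_norm hnorm_summable
    _ ≤ ∑' j, 2 * Mχ * q j :=
        Summable.tsum_le_tsum hpt hnorm_summable (hq_summable.mul_left _)
    _ = 2 * Mχ * ∑' j, q j := tsum_mul_left
    _ ≤ 2 * Mχ * (Real.sqrt X * Real.sqrt Y) := by
        apply mul_le_mul_of_nonneg_left hq_tsum (by positivity)
    _ = 2 * Mχ * Real.sqrt C₀ * lam ^ ((d:ℝ)/2 - s) * Real.sqrt Y := by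
        rw [hXdef, Real.sqrt_mul hC₀pos.le]
        have : Real.sqrt (lam ^ ((d:ℝ) - 2*s)) = lam ^ ((d:ℝ)/2 - s) := by
          rw [Real.sqrt_eq_rpow, ← Real.rpow_mul hlam0.le]
          congr 1
          ring
        rw [this]
        ring
    _ = 2 * Mχ * Real.sqrt C₀ * lam ^ ((d:ℝ)/2 - s) * HsNorm s u := by
        rfl

end
end

section
/- Bernstein inequality in the quasiperiodic direction, anisotropic version (Lemma 5.1, bound (b2)): Assume s > (d−1)/2. There is a constant C, depending on d, s, k and χ, such that for every dyadic λ = 2^l (l ≥ 0 an integer) and every u ∈ H^{s,1/2}(𝕋^d), ‖P_λ^α u‖_{L^∞(𝕋^d)} ≤ C λ^{(d−1)/2−s} ‖u‖_{H^{s,1/2}}. -/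
noncomputable section
open scoped BigOperators
open Filter

variable {d : ℕ}

section BernsteinAux

open scoped ENNReal NNReal

private lemma aux_step (p : ℝ) (hp : 1 < p) (x : ℝ) (hx : 1 ≤ x) :
    (x+1) ^ (-p) ≤ (p-1)⁻¹ * (x ^ (1-p) - (x+1) ^ (1-p)) := by
  have hx0 : 0 < x := lt_of_lt_of_le one_pos hx
  obtain ⟨c, hc, hceq⟩ := exists_hasDerivAt_eq_slope (fun y : ℝ => y ^ (1-p))
      (fun y : ℝ => (1-p) * y ^ (-p)) (by linarith : x < x + 1)
      (fun y hy => by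
        have hy0 : y ≠ 0 := by have h1 := hy.1; intro h; rw [h] at h1; linarith
        exact (Real.continuousAt_rpow_const y (1-p) (Or.inl hy0)).continuousWithinAt)
      (fun y hy => by
        have hy0 : y ≠ 0 := by have h1 := hy.1; intro h; rw [h] at h1; linarith
        have h := Real.hasDerivAt_rpow_const (x := y) (p := 1-p) (Or.inl hy0)
        have he : 1 - p - 1 = -p := by ring
        rw [he] at h
        exact h)
  have hc0 : 0 < c := lt_trans hx0 hc.1
  have hcx : c ≤ x + 1 := le_of_lt hc.2
  have hkey : x ^ (1-p) - (x+1) ^ (1-p) = (p-1) * c ^ (-p) := by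
    have h2 : (x + 1 - x) = 1 := by ring
    rw [h2, div_one] at hceq
    nlinarith [hceq]
  have hmono : (x+1) ^ (-p) ≤ c ^ (-p) :=
    Real.rpow_le_rpow_of_nonpos hc0 hcx (by linarith)
  have hp1 : 0 < p - 1 := by linarith
  rw [hkey]
  rw [inv_mul_eq_div, mul_comm, mul_div_assoc, div_self (ne_of_gt hp1), mul_one]
  exact hmono

private lemma aux_tail_strong (p : ℝ) (hp : 1 < p) (N : ℕ) (hN : 1 ≤ N) :
    ∀ M, N ≤ M → ∑ n ∈ Finset.Ioc N M, ((n:ℝ)) ^ (-p)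
      ≤ (p-1)⁻¹ * ((N:ℝ) ^ (1-p) - (M:ℝ) ^ (1-p)) := by
  intro M hM
  induction M, hM using Nat.le_induction with
  | base => simp
  | succ M hM ih =>
    rw [Finset.sum_Ioc_succ_top hM]
    have h1 : (1:ℝ) ≤ (M:ℝ) := by
      have : 1 ≤ M := le_trans hN hM
      exact_mod_cast this
    have h2 := aux_step p hp (M:ℝ) h1
    push_cast
    push_cast at ih h2
    nlinarith [h2, ih]

private lemma aux_tail (p : ℝ) (hp : 1 < p) (N : ℕ) (hN : 1 ≤ N) (M : ℕ) :
    ∑ n ∈ Finset.Ioc N M, ((n:ℝ)) ^ (-p) ≤ (p-1)⁻¹ * (N:ℝ) ^ (1-p) := by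
  have hNp : (0:ℝ) < (N:ℝ) := by exact_mod_cast hN
  have hinv : (0:ℝ) ≤ (p-1)⁻¹ := inv_nonneg.mpr (by linarith)
  rcases le_or_gt N M with h | h
  · refine le_trans (aux_tail_strong p hp N hN M h) ?_
    have hM : (0:ℝ) ≤ (M:ℝ) ^ (1-p) := Real.rpow_nonneg (Nat.cast_nonneg M) _
    nlinarith [Real.rpow_pos_of_pos hNp (1-p)]
  · rw [Finset.Ioc_eq_empty (by omega)]
    simp
    exact mul_nonneg hinv (Real.rpow_nonneg hNp.le _)

private lemma aux_natSum (p : ℝ) (hp : 1 < p) (A : ℝ) (hA : 1 ≤ A) :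
    ∑' n : ℕ, ENNReal.ofReal ((max A (n:ℝ)) ^ (-p))
      ≤ ENNReal.ofReal ((3 + (p-1)⁻¹) * A ^ (1-p)) := by
  have hA0 : (0:ℝ) < A := lt_of_lt_of_le one_pos hA
  set N : ℕ := ⌈A⌉₊ with hNdef
  have hN1 : 1 ≤ N := Nat.one_le_ceil_iff.mpr hA0
  have hAN : A ≤ (N:ℝ) := Nat.le_ceil A
  have hNA : (N:ℝ) ≤ A + 1 := by
    have := Nat.ceil_lt_add_one hA0.le
    linarith
  have hpt : ∀ n : ℕ, ENNReal.ofReal ((max A (n:ℝ)) ^ (-p))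
      ≤ (if n ≤ N then ENNReal.ofReal (A ^ (-p)) else 0)
        + (if N < n then ENNReal.ofReal (((n:ℝ)) ^ (-p)) else 0) := by
    intro n
    rcases le_or_gt n N with h | h
    · rw [if_pos h, if_neg (by omega)]
      rw [add_zero]
      apply ENNReal.ofReal_le_ofReal
      exact Real.rpow_le_rpow_of_nonpos hA0 (le_max_left _ _) (by linarith)
    · rw [if_neg (by omega), if_pos h, zero_add]
      apply ENNReal.ofReal_le_ofReal
      have hn : A ≤ (n:ℝ) := by
        refine le_trans hAN ?_
        exact_mod_cast Nat.le_of_lt h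
      rw [max_eq_right hn]
  refine le_trans (ENNReal.tsum_le_tsum hpt) ?_
  rw [ENNReal.tsum_add]
  have h1 : ∑' n : ℕ, (if n ≤ N then ENNReal.ofReal (A ^ (-p)) else 0)
      ≤ ENNReal.ofReal (3 * A ^ (1-p)) := by
    rw [tsum_eq_sum (s := Finset.range (N+1)) (by
      intro n hn
      rw [if_neg (by simp at hn; omega)])]
    have : ∑ n ∈ Finset.range (N+1), (if n ≤ N then ENNReal.ofReal (A ^ (-p)) else 0)
        = ∑ n ∈ Finset.range (N+1), ENNReal.ofReal (A ^ (-p)) := by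
      apply Finset.sum_congr rfl
      intro n hn
      rw [if_pos (by simp at hn; omega)]
    rw [this, Finset.sum_const, Finset.card_range, nsmul_eq_mul]
    have hcard : ((N+1 : ℕ) : ℝ≥0∞) = ENNReal.ofReal ((N+1:ℕ):ℝ) := by
      rw [ENNReal.ofReal_natCast]
    rw [hcard, ← ENNReal.ofReal_mul (by positivity)]
    apply ENNReal.ofReal_le_ofReal
    have hc3 : ((N+1:ℕ):ℝ) ≤ 3 * A := by push_cast; linarith
    have hApos : (0:ℝ) < A ^ (-p) := Real.rpow_pos_of_pos hA0 _
    have : A ^ (1-p) = A * A ^ (-p) := by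
      have := Real.rpow_add hA0 1 (-p)
      rw [show (1:ℝ) + -p = 1 - p by ring, Real.rpow_one] at this
      exact this
    rw [this]
    nlinarith
  have h2 : ∑' n : ℕ, (if N < n then ENNReal.ofReal (((n:ℝ)) ^ (-p)) else 0)
      ≤ ENNReal.ofReal ((p-1)⁻¹ * A ^ (1-p)) := by
    rw [ENNReal.tsum_eq_iSup_sum]
    apply iSup_le
    intro F
    have : ∑ n ∈ F, (if N < n then ENNReal.ofReal (((n:ℝ)) ^ (-p)) else 0)
        = ENNReal.ofReal (∑ n ∈ F, (if N < n then ((n:ℝ)) ^ (-p) else 0)) := by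
      rw [ENNReal.ofReal_sum_of_nonneg (fun n _ => by positivity)]
      apply Finset.sum_congr rfl
      intro n _
      split_ifs
      · rfl
      · simp
    rw [this]
    apply ENNReal.ofReal_le_ofReal
    have hsub : ∑ n ∈ F, (if N < n then ((n:ℝ)) ^ (-p) else 0)
        = ∑ n ∈ F.filter (N < ·), ((n:ℝ)) ^ (-p) := (Finset.sum_filter _ _).symm
    rw [hsub]
    have hsubset : F.filter (N < ·) ⊆ Finset.Ioc N (F.sup id) := by
      intro n hn
      simp only [Finset.mem_filter] at hn
      simp only [Finset.mem_Ioc]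
      exact ⟨hn.2, Finset.le_sup (f := id) hn.1⟩
    refine le_trans (Finset.sum_le_sum_of_subset_of_nonneg hsubset
      (fun n _ _ => by positivity)) ?_
    refine le_trans (aux_tail p hp N hN1 (F.sup id)) ?_
    have : (N:ℝ) ^ (1-p) ≤ A ^ (1-p) :=
      Real.rpow_le_rpow_of_nonpos hA0 hAN (by linarith)
    have hinv : (0:ℝ) ≤ (p-1)⁻¹ := inv_nonneg.mpr (by linarith)
    nlinarith
  calc _ ≤ ENNReal.ofReal (3 * A ^ (1-p)) + ENNReal.ofReal ((p-1)⁻¹ * A ^ (1-p)) :=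
        add_le_add h1 h2
    _ = ENNReal.ofReal ((3 + (p-1)⁻¹) * A ^ (1-p)) := by
        rw [← ENNReal.ofReal_add (by positivity) (by
          exact mul_nonneg (inv_nonneg.mpr (by linarith)) (Real.rpow_nonneg hA0.le _))]
        ring_nf

private lemma aux_intSum (p : ℝ) (hp : 1 < p) (A : ℝ) (hA : 1 ≤ A) :
    ∑' n : ℤ, ENNReal.ofReal ((max A |(n:ℝ)|) ^ (-p))
      ≤ ENNReal.ofReal ((2 * (3 + (p-1)⁻¹)) * A ^ (1-p)) := by
  have hA0 : (0:ℝ) < A := lt_of_lt_of_le one_pos hA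
  set F : ℤ → ℝ≥0∞ := fun n => ENNReal.ofReal ((max A |(n:ℝ)|) ^ (-p)) with hF
  have hsplit : ∀ n : ℤ, F n = (if 0 ≤ n then F n else 0) + (if 0 ≤ n then 0 else F n) := by
    intro n; split_ifs <;> simp
  calc ∑' n : ℤ, F n
      = ∑' n : ℤ, ((if 0 ≤ n then F n else 0) + (if 0 ≤ n then 0 else F n)) := by
        exact tsum_congr hsplit
    _ = (∑' n : ℤ, (if 0 ≤ n then F n else 0)) + ∑' n : ℤ, (if 0 ≤ n then 0 else F n) :=
        ENNReal.tsum_add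
    _ ≤ ENNReal.ofReal ((3 + (p-1)⁻¹) * A ^ (1-p))
        + ENNReal.ofReal ((3 + (p-1)⁻¹) * A ^ (1-p)) := by
        gcongr
        · have hinj : Function.Injective ((↑·) : ℕ → ℤ) := fun a b h => by simpa using h
          rw [← Function.Injective.tsum_eq hinj (f := fun n : ℤ => if 0 ≤ n then F n else 0)
            (by
              intro n hn
              simp only [Function.mem_support] at hn
              by_cases h0 : 0 ≤ n
              · exact ⟨n.toNat, by simp [Int.toNat_of_nonneg h0]⟩
              · exact absurd (if_neg h0) hn)]
          refine le_trans (le_of_eq (tsum_congr (fun n : ℕ => ?_))) (aux_natSum p hp A hA)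
          rw [if_pos (by positivity)]
          simp [hF]
        · have hinj : Function.Injective (fun n : ℕ => (-(n+1) : ℤ)) := by
            intro a b h; simp at h; exact h
          rw [← Function.Injective.tsum_eq hinj (f := fun n : ℤ => if 0 ≤ n then 0 else F n)
            (by
              intro n hn
              simp only [Function.mem_support] at hn
              by_cases h0 : 0 ≤ n
              · exact absurd (if_pos h0) hn
              · refine ⟨(-n-1).toNat, ?_⟩
                simp only
                have : ((-n-1).toNat : ℤ) = -n-1 := Int.toNat_of_nonneg (by omega)
                omega)]
          refine le_trans (ENNReal.tsum_le_tsum (fun n : ℕ => ?_)) (aux_natSum p hp A hA)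
          rw [if_neg (by omega)]
          simp only [hF]
          apply ENNReal.ofReal_le_ofReal
          apply Real.rpow_le_rpow_of_nonpos (lt_max_of_lt_left hA0) _ (by linarith)
          have : |((-((n:ℤ)+1) : ℤ) : ℝ)| = (n:ℝ) + 1 := by
            push_cast; rw [abs_neg, abs_of_nonneg (by positivity)]
          rw [this]
          exact max_le_max (le_refl A) (by linarith)
    _ = ENNReal.ofReal ((2 * (3 + (p-1)⁻¹)) * A ^ (1-p)) := by
        have hco : (0:ℝ) ≤ (3 + (p-1)⁻¹) * A ^ (1-p) :=
          mul_nonneg (by have := inv_nonneg.mpr (show (0:ℝ) ≤ p - 1 by linarith); linarith)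
            (Real.rpow_nonneg hA0.le _)
        rw [← ENNReal.ofReal_add hco hco]
        ring_nf

private lemma one_le_jb {d : ℕ} (j : Freq d) : 1 ≤ jb j := by
  rw [jb, show (1:ℝ) = Real.sqrt 1 by rw [Real.sqrt_one]]
  apply Real.sqrt_le_sqrt
  have : (0:ℝ) ≤ ∑ i, ((j i : ℝ)) ^ 2 := Finset.sum_nonneg fun i _ => sq_nonneg _
  rw [Real.sqrt_one]
  linarith

private lemma jb_cons_ge_jb {m : ℕ} (n : ℤ) (g : Freq m) : jb g ≤ jb (Fin.cons n g) := by
  rw [jb, jb]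
  apply Real.sqrt_le_sqrt
  rw [Fin.sum_univ_succ]
  simp only [Fin.cons_zero, Fin.cons_succ]
  nlinarith [sq_nonneg ((n:ℝ))]

private lemma jb_cons_ge_abs {m : ℕ} (n : ℤ) (g : Freq m) : |(n:ℝ)| ≤ jb (Fin.cons n g) := by
  rw [jb, ← Real.sqrt_sq_eq_abs]
  apply Real.sqrt_le_sqrt
  rw [Fin.sum_univ_succ]
  simp only [Fin.cons_zero, Fin.cons_succ]
  have : (0:ℝ) ≤ ∑ i : Fin m, ((g i : ℝ)) ^ 2 := Finset.sum_nonneg fun i _ => sq_nonneg _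
  push_cast
  nlinarith

private lemma jb_ge_abs {d : ℕ} (j : Freq d) (i : Fin d) : |(j i : ℝ)| ≤ jb j := by
  rw [jb, ← Real.sqrt_sq_eq_abs]
  apply Real.sqrt_le_sqrt
  have h := Finset.single_le_sum (f := fun i' => ((j i' : ℝ)) ^ 2)
    (fun i' _ => sq_nonneg _) (Finset.mem_univ i)
  linarith

private lemma aux_latSum : ∀ (m : ℕ) (p : ℝ), (m:ℝ) < p → ∃ C : ℝ, 0 < C ∧ ∀ L : ℝ, 1 ≤ L →
    ∑' j : Freq m, ENNReal.ofReal ((max (jb j) L) ^ (-p))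
      ≤ ENNReal.ofReal (C * L ^ ((m:ℝ) - p)) := by
  intro m
  induction m with
  | zero =>
    intro p hp
    refine ⟨1, one_pos, fun L hL => ?_⟩
    have huniq : ∀ j : Freq 0, j = (default : Freq 0) := fun j => Subsingleton.elim _ _
    rw [tsum_eq_single (default : Freq 0) (fun b hb => absurd (huniq b) hb)]
    have hjb : jb (default : Freq 0) = 1 := by simp [jb]
    rw [hjb, max_eq_right hL, one_mul]
    apply ENNReal.ofReal_le_ofReal
    rw [show ((0:ℕ):ℝ) - p = -p by push_cast; ring]
  | succ m ih =>
    intro p hp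
    have hm : (m:ℝ) < p - 1 := by push_cast at hp ⊢; linarith
    have hp1 : 1 < p := by
      have : (0:ℝ) ≤ (m:ℝ) := Nat.cast_nonneg m
      push_cast at hp; linarith
    obtain ⟨C', hC', hIH⟩ := ih (p-1) hm
    set D : ℝ := 2 * (3 + (p-1)⁻¹) with hD
    have hD0 : 0 < D := by
      have : (0:ℝ) < (p-1)⁻¹ := inv_pos.mpr (by linarith)
      rw [hD]; linarith
    refine ⟨D * C', mul_pos hD0 hC', fun L hL => ?_⟩
    have hL0 : (0:ℝ) < L := lt_of_lt_of_le one_pos hL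
    have hre : ∑' j : Freq (m+1), ENNReal.ofReal ((max (jb j) L) ^ (-p))
        = ∑' (g : Freq m), ∑' (n : ℤ),
            ENNReal.ofReal ((max (jb (Fin.cons n g)) L) ^ (-p)) := by
      rw [← Equiv.tsum_eq (Fin.consEquiv (fun _ : Fin (m+1) => ℤ))
        (fun j => ENNReal.ofReal ((max (jb j) L) ^ (-p)))]
      rw [ENNReal.tsum_prod']
      rw [ENNReal.tsum_comm]
      rfl
    rw [hre]
    have hinner : ∀ g : Freq m, ∑' (n : ℤ),
        ENNReal.ofReal ((max (jb (Fin.cons n g)) L) ^ (-p))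
        ≤ ENNReal.ofReal (D * (max (jb g) L) ^ (-(p-1))) := by
      intro g
      set A : ℝ := max (jb g) L with hA
      have hA1 : 1 ≤ A := le_trans (one_le_jb g) (le_max_left _ _)
      have hpt : ∀ n : ℤ, ENNReal.ofReal ((max (jb (Fin.cons n g)) L) ^ (-p))
          ≤ ENNReal.ofReal ((max A |(n:ℝ)|) ^ (-p)) := by
        intro n
        apply ENNReal.ofReal_le_ofReal
        apply Real.rpow_le_rpow_of_nonpos
          (lt_max_of_lt_left (lt_of_lt_of_le one_pos hA1)) _ (by linarith)
        apply max_le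
        · apply max_le
          · exact le_max_of_le_left (jb_cons_ge_jb n g)
          · exact le_max_right _ _
        · exact le_max_of_le_left (jb_cons_ge_abs n g)
      refine le_trans (ENNReal.tsum_le_tsum hpt) ?_
      refine le_trans (aux_intSum p hp1 A hA1) ?_
      apply ENNReal.ofReal_le_ofReal
      rw [show (1 - p : ℝ) = -(p-1) by ring]
    calc ∑' (g : Freq m), ∑' (n : ℤ), ENNReal.ofReal ((max (jb (Fin.cons n g)) L) ^ (-p))
        ≤ ∑' (g : Freq m), ENNReal.ofReal (D * (max (jb g) L) ^ (-(p-1))) :=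
          ENNReal.tsum_le_tsum hinner
      _ = ENNReal.ofReal D * ∑' (g : Freq m), ENNReal.ofReal ((max (jb g) L) ^ (-(p-1))) := by
          rw [← ENNReal.tsum_mul_left]
          congr 1
          ext g
          rw [ENNReal.ofReal_mul hD0.le]
      _ ≤ ENNReal.ofReal D * ENNReal.ofReal (C' * L ^ ((m:ℝ) - (p-1))) := by
          gcongr
          exact hIH L hL
      _ ≤ ENNReal.ofReal (D * C' * L ^ (((m+1:ℕ):ℝ) - p)) := by
          rw [← ENNReal.ofReal_mul hD0.le]
          apply ENNReal.ofReal_le_ofReal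
          rw [show ((m:ℝ) - (p-1)) = ((m+1:ℕ):ℝ) - p by push_cast; ring]
          ring_nf
          exact le_refl _

private lemma aux_count (k0 cg lam M : ℝ) (hk0 : k0 ≠ 0) (hlam : 1 ≤ lam) (hM : 0 ≤ M) :
    ∑' n : ℤ, ENNReal.ofReal (if |(n:ℝ) * k0 + cg| ≤ 2*lam then M else 0)
      ≤ ENNReal.ofReal ((4/|k0| + 1) * lam * M) := by
  have hk0' : (0:ℝ) < |k0| := abs_pos.mpr hk0
  set x : ℝ := -cg/k0 with hx
  set r : ℝ := 2*lam/|k0| with hr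
  have hr0 : 0 < r := by positivity
  have hmem : ∀ n : ℤ, |(n:ℝ) * k0 + cg| ≤ 2*lam → ((n:ℝ) ∈ Set.Icc (x - r) (x + r)) := by
    intro n hn
    have habs : |(n:ℝ) - x| * |k0| = |(n:ℝ) * k0 + cg| := by
      rw [← abs_mul]
      congr 1
      rw [hx, sub_mul, div_mul_cancel₀ _ hk0]; ring
    have : |(n:ℝ) - x| ≤ r := by
      rw [hr, le_div_iff₀ hk0', habs]
      exact hn
    rw [abs_le] at this
    constructor <;> linarith [this.1, this.2]
  rw [tsum_eq_sum (s := Finset.Icc ⌈x - r⌉ ⌊x + r⌋) (by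
    intro n hn
    rw [if_neg]
    · simp
    · intro hcond
      apply hn
      obtain ⟨h1, h2⟩ := hmem n hcond
      rw [Finset.mem_Icc]
      exact ⟨Int.ceil_le.mpr h1, Int.le_floor.mpr h2⟩)]
  refine le_trans (Finset.sum_le_card_nsmul _ _ (ENNReal.ofReal M) (fun n _ => by
    split_ifs <;> [exact le_refl _; exact (by simp)])) ?_
  rw [nsmul_eq_mul]
  have hcard : ((Finset.Icc ⌈x - r⌉ ⌊x + r⌋).card : ℝ) ≤ 2*r + 1 := by
    rw [Int.card_Icc]
    rcases le_or_gt (⌈x - r⌉ : ℤ) ⌊x + r⌋ with h | h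
    · have h0 : ((⌊x + r⌋ + 1 - ⌈x - r⌉).toNat : ℤ) = ⌊x + r⌋ + 1 - ⌈x - r⌉ :=
        Int.toNat_of_nonneg (by omega)
      have h1 : ((⌊x + r⌋ + 1 - ⌈x - r⌉).toNat : ℝ) = ((⌊x + r⌋ : ℝ) + 1 - (⌈x - r⌉ : ℝ)) := by
        exact_mod_cast congrArg (Int.cast : ℤ → ℝ) h0
      rw [h1]
      have := Int.floor_le (x + r)
      have := Int.le_ceil (x - r)
      linarith
    · have : (⌊x + r⌋ + 1 - ⌈x - r⌉).toNat = 0 := by omega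
      rw [this]
      norm_num
      linarith
  calc ((Finset.Icc ⌈x - r⌉ ⌊x + r⌋).card : ℝ≥0∞) * ENNReal.ofReal M
      ≤ ENNReal.ofReal (2*r+1) * ENNReal.ofReal M := by
        gcongr
        rw [← ENNReal.ofReal_natCast]
        exact ENNReal.ofReal_le_ofReal hcard
    _ = ENNReal.ofReal ((2*r+1) * M) := by rw [← ENNReal.ofReal_mul (by linarith)]
    _ ≤ ENNReal.ofReal ((4/|k0| + 1) * lam * M) := by
        apply ENNReal.ofReal_le_ofReal
        have h4 : (4/|k0| + 1) * lam = 4*lam/|k0| + lam := by field_simp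
        have h5 : 4*lam/|k0| = 2*(2*lam/|k0|) := by ring
        have : 2*r + 1 ≤ (4/|k0| + 1) * lam := by
          rw [hr, h4, h5]; linarith
        nlinarith

private lemma aux_CS {ι : Type*} (f g : ι → ℝ) (hf0 : ∀ i, 0 ≤ f i) (hg0 : ∀ i, 0 ≤ g i)
    (hf : Summable (fun i => f i ^ 2)) (hg : Summable (fun i => g i ^ 2)) :
    Summable (fun i => f i * g i) ∧
      ∑' i, f i * g i ≤ Real.sqrt (∑' i, f i ^ 2) * Real.sqrt (∑' i, g i ^ 2) := by
  have hsum : Summable (fun i => f i * g i) := by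
    apply Summable.of_nonneg_of_le (fun i => mul_nonneg (hf0 i) (hg0 i))
      (fun i => ?_) ((hf.add hg).div_const 2)
    have := sq_nonneg (f i - g i)
    nlinarith
  refine ⟨hsum, Summable.tsum_le_of_sum_le hsum (fun F => ?_)⟩
  refine le_trans (Real.sum_mul_le_sqrt_mul_sqrt F f g) ?_
  have h1 : ∑ i ∈ F, f i ^ 2 ≤ ∑' i, f i ^ 2 := Summable.sum_le_tsum F (fun i _ => sq_nonneg _) hf
  have h2 : ∑ i ∈ F, g i ^ 2 ≤ ∑' i, g i ^ 2 := Summable.sum_le_tsum F (fun i _ => sq_nonneg _) hg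
  exact mul_le_mul (Real.sqrt_le_sqrt h1) (Real.sqrt_le_sqrt h2)
    (Real.sqrt_nonneg _) (Real.sqrt_nonneg _)

end BernsteinAux


set_option maxHeartbeats 2000000 in
/-- **Lemma 5.1, bound (b2) (Bernstein inequality, anisotropic version).** Assume
`s > (d-1)/2`. There is a constant `C = C(d,s,k,χ)` such that for every dyadic
`λ = 2^l` and every `u ∈ H^{s,1/2}(𝕋^d)`,
`‖P_λ^α u‖_{L^∞(𝕋^d)} ≤ C λ^{(d-1)/2-s} ‖u‖_{H^{s,1/2}}`. -/
theorem bernstein_aniso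
    (d : ℕ) (hd : 1 ≤ d) (k : Fin d → ℝ) (hk : Indep k)
    (s : ℝ) (hs : ((d : ℝ) - 1) / 2 < s)
    (χ : ℝ → ℝ) (hχsmooth : ContDiff ℝ (⊤ : ℕ∞) χ) (hχsupp : HasCompactSupport χ)
    (hχone : ∀ ξ : ℝ, |ξ| ≤ 1 → χ ξ = 1) (hχzero : ∀ ξ : ℝ, 2 ≤ |ξ| → χ ξ = 0) :
    ∃ C : ℝ, 0 < C ∧
      ∀ l : ℕ, ∀ u : Coeffs d, MemSob k s (1/2) u →
        ∀ α : Fin d → ℝ,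
          ‖value (LPproj k χ l u) α‖
            ≤ C * ((2:ℝ) ^ l) ^ (((d : ℝ) - 1) / 2 - s) * sobNorm k s (1/2) u := by
  classical
  obtain ⟨m, rfl⟩ : ∃ m, d = m + 1 := ⟨d - 1, (Nat.succ_pred_eq_of_pos hd).symm⟩
  have hk0 : k 0 ≠ 0 := by
    intro h0
    have hdot : dotk k (Pi.single (0 : Fin (m+1)) 1) = k 0 := by
      rw [dotk]
      rw [Finset.sum_eq_single (0 : Fin (m+1))]
      · simp
      · intro i _ hi
        rw [Pi.single_eq_of_ne hi]
        simp
      · simp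
    have h2 := hk (Pi.single (0 : Fin (m+1)) 1) (by rw [hdot, h0])
    have h1 := congrFun h2 0
    simp at h1
  have habsk0 : 0 < |k 0| := abs_pos.mpr hk0
  set K : ℝ := ∑ i, |k i| with hKdef
  have hK : 0 < K :=
    Finset.sum_pos' (fun i _ => abs_nonneg _) ⟨0, Finset.mem_univ _, habsk0⟩
  have hdot_le : ∀ j : Freq (m+1), |dotk k j| ≤ K * jb j := by
    intro j
    rw [dotk]
    refine le_trans (Finset.abs_sum_le_sum_abs _ _) ?_
    rw [hKdef, Finset.sum_mul]
    apply Finset.sum_le_sum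
    intro i _
    rw [abs_mul]
    have h1 := jb_ge_abs j i
    have h2 := abs_nonneg (k i)
    have h3 := abs_nonneg ((j i : ℝ))
    nlinarith
  obtain ⟨M0, hM0⟩ := hχsupp.exists_bound_of_continuous hχsmooth.continuous
  set Mχ : ℝ := max M0 1 with hMχdef
  have hMχ1 : 1 ≤ Mχ := le_max_right _ _
  have hMχ0 : 0 < Mχ := lt_of_lt_of_le one_pos hMχ1
  have hMχ : ∀ x, |χ x| ≤ Mχ := by
    intro x
    have h := hM0 x
    rw [Real.norm_eq_abs] at h
    exact le_trans h (le_max_left _ _)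
  set c : ℝ := min 1 (2*K)⁻¹ with hcdef
  have hc0 : 0 < c := lt_min one_pos (inv_pos.mpr (by linarith))
  have hc1 : c ≤ 1 := min_le_left _ _
  have hcK : c ≤ (2*K)⁻¹ := min_le_right _ _
  have h2s : (m:ℝ) < 2*s := by
    push_cast at hs
    nlinarith [hs]
  have h2s0 : 0 < 2*s := lt_of_le_of_lt (Nat.cast_nonneg m) h2s
  obtain ⟨CL, hCL, hLat⟩ := aux_latSum m (2*s) h2s
  set B₀ : ℝ := 4/|k 0| + 1 with hB₀def
  have hB₀ : 0 < B₀ := by positivity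
  set C₂ : ℝ := 8*Mχ^2 * B₀ * CL * c ^ ((m:ℝ) - 2*s) with hC₂def
  have hC₂ : 0 < C₂ := by
    have h := Real.rpow_pos_of_pos hc0 ((m:ℝ) - 2*s)
    positivity
  refine ⟨Real.sqrt C₂, Real.sqrt_pos.mpr hC₂, ?_⟩
  intro l u hu α
  set lam : ℝ := (2:ℝ)^l with hlamdef
  have hlam1 : 1 ≤ lam := one_le_pow₀ one_le_two
  have hlam0 : 0 < lam := lt_of_lt_of_le one_pos hlam1
  set mlv : Freq (m+1) → ℝ := fun j =>
    if l = 0 then χ (dotk k j)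
    else χ ((2:ℝ) ^ (-(l:ℝ)) * dotk k j) - χ ((2:ℝ) ^ (-(l:ℝ) + 1) * dotk k j) with hmlvdef
  have hLP : ∀ j, LPproj k χ l u j = ((mlv j : ℝ) : ℂ) * u j := by
    intro j
    by_cases h : l = 0 <;> simp [LPproj, hmlvdef, h]
  have hrpow : (2:ℝ) ^ (-(l:ℝ)) = lam⁻¹ := by
    rw [Real.rpow_neg (by norm_num), Real.rpow_natCast]
  have hrpow2 : (2:ℝ) ^ (-(l:ℝ) + 1) = 2 * lam⁻¹ := by
    rw [Real.rpow_add (by norm_num), hrpow, Real.rpow_one]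
    ring
  have hS1 : ∀ j, |mlv j| ≤ 2*Mχ := by
    intro j
    simp only [hmlvdef]
    by_cases h : l = 0
    · rw [if_pos h]
      have h1 := hMχ (dotk k j)
      linarith
    · rw [if_neg h]
      refine le_trans (abs_sub _ _) ?_
      have h1 := hMχ ((2:ℝ) ^ (-(l:ℝ)) * dotk k j)
      have h2 := hMχ ((2:ℝ) ^ (-(l:ℝ) + 1) * dotk k j)
      linarith
  have hS2 : ∀ j, mlv j ≠ 0 → |dotk k j| ≤ 2*lam := by
    intro j hne
    by_contra hgt
    push_neg at hgt
    apply hne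
    simp only [hmlvdef]
    by_cases h : l = 0
    · rw [if_pos h]
      apply hχzero
      have hl1 : lam = 1 := by rw [hlamdef, h, pow_zero]
      rw [hl1] at hgt
      linarith
    · rw [if_neg h, hrpow, hrpow2]
      have h1 : 2 ≤ |lam⁻¹ * dotk k j| := by
        rw [abs_mul, abs_of_pos (inv_pos.mpr hlam0), inv_mul_eq_div, le_div_iff₀ hlam0]
        linarith
      have h2 : 2 ≤ |2 * lam⁻¹ * dotk k j| := by
        rw [show (2:ℝ) * lam⁻¹ * dotk k j = 2 * (lam⁻¹ * dotk k j) by ring, abs_mul, abs_two]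
        nlinarith [h1]
      rw [hχzero _ h1, hχzero _ h2, sub_zero]
  have hhalf : l ≠ 0 → ∀ j, mlv j ≠ 0 → lam/2 ≤ |dotk k j| := by
    intro h j hne
    by_contra hlt
    push_neg at hlt
    apply hne
    simp only [hmlvdef, if_neg h]
    rw [hrpow, hrpow2]
    have habs : |lam⁻¹ * dotk k j| < 1/2 := by
      rw [abs_mul, abs_of_pos (inv_pos.mpr hlam0), inv_mul_eq_div, div_lt_iff₀ hlam0]
      nlinarith [hlt]
    have h1 : |lam⁻¹ * dotk k j| ≤ 1 := by linarith
    have h2 : |2 * lam⁻¹ * dotk k j| ≤ 1 := by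
      rw [show (2:ℝ) * lam⁻¹ * dotk k j = 2 * (lam⁻¹ * dotk k j) by ring, abs_mul, abs_two]
      linarith
    rw [hχone _ h1, hχone _ h2, sub_self]
  have hS3 : ∀ j, mlv j ≠ 0 → c * lam ≤ jb j := by
    intro j hne
    by_cases h : l = 0
    · have hl1 : lam = 1 := by rw [hlamdef, h, pow_zero]
      rw [hl1, mul_one]
      exact le_trans hc1 (one_le_jb j)
    · have h1 := hhalf h j hne
      have h2 := hdot_le j
      have h3 : lam / (2*K) ≤ jb j := by
        rw [div_le_iff₀ (by linarith)]
        nlinarith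
      have h4 : c * lam ≤ lam / (2*K) := by
        rw [div_eq_mul_inv, mul_comm lam]
        exact mul_le_mul_of_nonneg_right hcK hlam0.le
      linarith
  have hS4 : ∀ j, mlv j ≠ 0 → lam/2 ≤ (1 + dotk k j ^ 2) ^ ((1:ℝ)/2) := by
    intro j hne
    have hsqrt : (1 + dotk k j ^ 2) ^ ((1:ℝ)/2) = Real.sqrt (1 + dotk k j ^ 2) := by
      rw [Real.sqrt_eq_rpow]
    rw [hsqrt]
    by_cases h : l = 0
    · have hl1 : lam = 1 := by rw [hlamdef, h, pow_zero]
      rw [hl1]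
      have h1 : Real.sqrt 1 ≤ Real.sqrt (1 + dotk k j ^ 2) :=
        Real.sqrt_le_sqrt (by nlinarith [sq_nonneg (dotk k j)])
      rw [Real.sqrt_one] at h1
      linarith
    · have h1 := hhalf h j hne
      have h2 : |dotk k j| ≤ Real.sqrt (1 + dotk k j ^ 2) := by
        rw [← Real.sqrt_sq_eq_abs]
        exact Real.sqrt_le_sqrt (by nlinarith)
      linarith
  have hwt : ∀ j, 0 < wt k s (1/2) j := by
    intro j
    rw [wt]
    have h1 : 0 < jb j ^ (2*s) :=
      Real.rpow_pos_of_pos (lt_of_lt_of_le one_pos (one_le_jb j)) _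
    have h2 : 0 < (1 + dotk k j ^ 2) ^ ((1:ℝ)/2) :=
      Real.rpow_pos_of_pos (by nlinarith [sq_nonneg (dotk k j)]) _
    exact mul_pos h1 h2
  set f : Freq (m+1) → ℝ := fun j => Real.sqrt (wt k s (1/2) j) * ‖u j‖ with hfdef
  set g : Freq (m+1) → ℝ := fun j => |mlv j| / Real.sqrt (wt k s (1/2) j) with hgdef
  have hf0 : ∀ j, 0 ≤ f j := fun j => mul_nonneg (Real.sqrt_nonneg _) (norm_nonneg _)
  have hg0 : ∀ j, 0 ≤ g j := fun j => div_nonneg (abs_nonneg _) (Real.sqrt_nonneg _)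
  have hf2 : (fun j => f j ^ 2) = fun j => wt k s (1/2) j * ‖u j‖ ^ 2 := by
    funext j
    simp only [hfdef]
    rw [mul_pow, Real.sq_sqrt (hwt j).le]
  have hfsum : Summable (fun j => f j ^ 2) := by rw [hf2]; exact hu
  set hcore : Freq (m+1) → ℝ := fun j =>
    if |dotk k j| ≤ 2*lam then (max (jb (Fin.tail j)) (c*lam)) ^ (-(2*s)) else 0 with hcoredef
  have hcore0 : ∀ j, 0 ≤ hcore j := by
    intro j
    simp only [hcoredef]
    split_ifs
    · exact Real.rpow_nonneg (le_trans (mul_nonneg hc0.le hlam0.le) (le_max_right _ _)) _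
    · exact le_refl 0
  set Bh : ℝ := B₀ * lam * (CL * (c*lam) ^ ((m:ℝ) - 2*s)) with hBhdef
  have hclam0 : 0 < c * lam := mul_pos hc0 hlam0
  have hBh0 : 0 ≤ Bh := by
    have h := Real.rpow_nonneg hclam0.le ((m:ℝ) - 2*s)
    positivity
  have hENN : ∑' j : Freq (m+1), ENNReal.ofReal (hcore j) ≤ ENNReal.ofReal Bh := by
    have hre : ∑' j : Freq (m+1), ENNReal.ofReal (hcore j)
        = ∑' (gg : Freq m), ∑' (n : ℤ), ENNReal.ofReal (hcore (Fin.cons n gg)) := by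
      rw [← Equiv.tsum_eq (Fin.consEquiv (fun _ : Fin (m+1) => ℤ))
        (fun j => ENNReal.ofReal (hcore j)), ENNReal.tsum_prod', ENNReal.tsum_comm]
      rfl
    rw [hre]
    have hdotcons : ∀ (n : ℤ) (gg : Freq m),
        dotk k (Fin.cons n gg) = (n:ℝ) * k 0 + ∑ i : Fin m, ((gg i : ℝ)) * k i.succ := by
      intro n gg
      rw [dotk, Fin.sum_univ_succ]
      simp [Fin.cons_zero, Fin.cons_succ]
    have hinner : ∀ gg : Freq m, ∑' (n : ℤ), ENNReal.ofReal (hcore (Fin.cons n gg))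
        ≤ ENNReal.ofReal (B₀ * lam * ((max (jb gg) (c*lam)) ^ (-(2*s)))) := by
      intro gg
      have hMg0 : 0 ≤ (max (jb gg) (c*lam)) ^ (-(2*s)) :=
        Real.rpow_nonneg (le_trans hclam0.le (le_max_right _ _)) _
      have heq : ∀ n : ℤ, hcore (Fin.cons n gg)
          = if |(n:ℝ) * k 0 + (∑ i : Fin m, ((gg i : ℝ)) * k i.succ)| ≤ 2*lam
            then (max (jb gg) (c*lam)) ^ (-(2*s)) else 0 := by
        intro n
        simp only [hcoredef]
        rw [hdotcons n gg, Fin.tail_cons]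
      calc ∑' (n : ℤ), ENNReal.ofReal (hcore (Fin.cons n gg))
          = ∑' (n : ℤ), ENNReal.ofReal
              (if |(n:ℝ) * k 0 + (∑ i : Fin m, ((gg i : ℝ)) * k i.succ)| ≤ 2*lam
                then (max (jb gg) (c*lam)) ^ (-(2*s)) else 0) :=
            tsum_congr (fun n => by rw [heq n])
        _ ≤ ENNReal.ofReal ((4/|k 0| + 1) * lam * ((max (jb gg) (c*lam)) ^ (-(2*s)))) :=
            aux_count (k 0) _ lam _ hk0 hlam1 hMg0
        _ = ENNReal.ofReal (B₀ * lam * ((max (jb gg) (c*lam)) ^ (-(2*s)))) := by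
            rw [hB₀def]
    have hmaxeq : ∀ gg : Freq m, max (jb gg) (c*lam) = max (jb gg) (max 1 (c*lam)) := by
      intro gg
      rcases le_total (c*lam) 1 with h | h
      · rw [max_eq_left h, max_eq_left (le_trans h (one_le_jb gg)),
          max_eq_left (one_le_jb gg)]
      · rw [max_eq_right h]
    have hL'1 : 1 ≤ max 1 (c*lam) := le_max_left _ _
    have hLe : (max 1 (c*lam)) ^ ((m:ℝ) - 2*s) ≤ (c*lam) ^ ((m:ℝ) - 2*s) := by
      rcases le_total (c*lam) 1 with h | h
      · rw [max_eq_left h]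
        have h1 := Real.rpow_le_rpow_of_nonpos hclam0 h (by linarith : (m:ℝ) - 2*s ≤ 0)
        exact h1
      · rw [max_eq_right h]
    calc ∑' (gg : Freq m), ∑' (n : ℤ), ENNReal.ofReal (hcore (Fin.cons n gg))
        ≤ ∑' (gg : Freq m),
            ENNReal.ofReal (B₀ * lam * ((max (jb gg) (c*lam)) ^ (-(2*s)))) :=
          ENNReal.tsum_le_tsum hinner
      _ = ENNReal.ofReal (B₀ * lam)
            * ∑' (gg : Freq m), ENNReal.ofReal ((max (jb gg) (c*lam)) ^ (-(2*s))) := by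
          rw [← ENNReal.tsum_mul_left]
          exact tsum_congr (fun gg => ENNReal.ofReal_mul (by positivity))
      _ ≤ ENNReal.ofReal (B₀ * lam) * ENNReal.ofReal (CL * (c*lam) ^ ((m:ℝ) - 2*s)) := by
          gcongr
          have h1 : ∑' (gg : Freq m), ENNReal.ofReal ((max (jb gg) (c*lam)) ^ (-(2*s)))
              = ∑' (gg : Freq m), ENNReal.ofReal ((max (jb gg) (max 1 (c*lam))) ^ (-(2*s))) :=
            tsum_congr (fun gg => by rw [hmaxeq gg])
          rw [h1]
          refine le_trans (hLat (max 1 (c*lam)) hL'1) ?_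
          apply ENNReal.ofReal_le_ofReal
          have h2 : 0 ≤ CL := hCL.le
          nlinarith [hLe]
      _ = ENNReal.ofReal Bh := by
          rw [hBhdef, ← ENNReal.ofReal_mul (by positivity)]
  have hfin : ∀ F : Finset (Freq (m+1)), ∑ j ∈ F, hcore j ≤ Bh := by
    intro F
    have h1 : ENNReal.ofReal (∑ j ∈ F, hcore j) = ∑ j ∈ F, ENNReal.ofReal (hcore j) :=
      ENNReal.ofReal_sum_of_nonneg (fun j _ => hcore0 j)
    have h2 : (∑ j ∈ F, ENNReal.ofReal (hcore j)) ≤ ENNReal.ofReal Bh :=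
      le_trans (ENNReal.sum_le_tsum F) hENN
    rw [← h1] at h2
    exact (ENNReal.ofReal_le_ofReal_iff hBh0).mp h2
  have hcsum : Summable hcore := summable_of_sum_le (fun j => hcore0 j) hfin
  have hctsum : ∑' j, hcore j ≤ Bh := Summable.tsum_le_of_sum_le hcsum hfin
  have hgle : ∀ j, g j ^ 2 ≤ (8*Mχ^2/lam) * hcore j := by
    intro j
    by_cases hne : mlv j = 0
    · have hgz : g j = 0 := by
        simp only [hgdef]
        rw [hne, abs_zero, zero_div]
      rw [hgz]
      rw [zero_pow two_ne_zero]
      exact mul_nonneg (by positivity) (hcore0 j)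
    · have hD := hS2 j hne
      have hcoreval : hcore j = (max (jb (Fin.tail j)) (c*lam)) ^ (-(2*s)) := by
        simp only [hcoredef]
        rw [if_pos hD]
      rw [hcoreval]
      set T : ℝ := max (jb (Fin.tail j)) (c*lam) with hTdef
      have hT0 : 0 < T := lt_of_lt_of_le hclam0 (le_max_right _ _)
      have hjbT : T ≤ jb j := by
        apply max_le
        · have h := jb_cons_ge_jb (j 0) (Fin.tail j)
          rw [Fin.cons_self_tail] at h
          exact h
        · exact hS3 j hne
      have hjb0 : 0 < jb j := lt_of_lt_of_le one_pos (one_le_jb j)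
      have hwtlow : T ^ (2*s) * (lam/2) ≤ wt k s (1/2) j := by
        rw [wt]
        apply mul_le_mul
        · exact Real.rpow_le_rpow hT0.le hjbT (by linarith)
        · exact hS4 j hne
        · linarith
        · exact Real.rpow_nonneg hjb0.le _
      have hg2 : g j ^ 2 = mlv j ^ 2 / wt k s (1/2) j := by
        simp only [hgdef]
        rw [div_pow, sq_abs, Real.sq_sqrt (hwt j).le]
      rw [hg2]
      have hnum : mlv j ^ 2 ≤ 4 * Mχ^2 := by
        have h := hS1 j
        have h2 := abs_nonneg (mlv j)
        nlinarith [sq_abs (mlv j)]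
      have hTpos : 0 < T ^ (2*s) := Real.rpow_pos_of_pos hT0 _
      have hden : 0 < T ^ (2*s) * (lam/2) := by positivity
      calc mlv j ^ 2 / wt k s (1/2) j ≤ (4*Mχ^2) / (T ^ (2*s) * (lam/2)) :=
            div_le_div₀ (by positivity) hnum hden hwtlow
        _ = (8*Mχ^2/lam) * T ^ (-(2*s)) := by
            rw [Real.rpow_neg hT0.le]
            field_simp
            ring
  have hg2sum : Summable (fun j => g j ^ 2) :=
    Summable.of_nonneg_of_le (fun j => sq_nonneg _) hgle (hcsum.mul_left _)
  have hg2tsum : ∑' j, g j ^ 2 ≤ C₂ * lam ^ ((m:ℝ) - 2*s) := by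
    have h1 : ∑' j, g j ^ 2 ≤ ∑' j, (8*Mχ^2/lam) * hcore j :=
      Summable.tsum_le_tsum hgle hg2sum (hcsum.mul_left _)
    rw [tsum_mul_left] at h1
    have h2 : (8*Mχ^2/lam) * (∑' j, hcore j) ≤ (8*Mχ^2/lam) * Bh :=
      mul_le_mul_of_nonneg_left hctsum (by positivity)
    have h3 : (8*Mχ^2/lam) * Bh = C₂ * lam ^ ((m:ℝ) - 2*s) := by
      rw [hBhdef, hC₂def, Real.mul_rpow hc0.le hlam0.le]
      field_simp
    linarith
  obtain ⟨hsumfg, hCS⟩ := aux_CS f g hf0 hg0 hfsum hg2sum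
  have hterm : ∀ j : Freq (m+1), ‖LPproj k χ l u j *
      Complex.exp (Complex.I * ((∑ i, ((j i : ℝ)) * α i : ℝ) : ℂ))‖ = f j * g j := by
    intro j
    rw [hLP j, norm_mul, norm_mul]
    have hexp : ‖Complex.exp (Complex.I * ((∑ i, ((j i : ℝ)) * α i : ℝ) : ℂ))‖ = 1 := by
      rw [mul_comm]; exact Complex.norm_exp_ofReal_mul_I _
    rw [hexp, mul_one, Complex.norm_real, Real.norm_eq_abs]
    simp only [hfdef, hgdef]
    have hsq : Real.sqrt (wt k s (1/2) j) ≠ 0 := ne_of_gt (Real.sqrt_pos.mpr (hwt j))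
    field_simp
  have hval : ‖value (LPproj k χ l u) α‖ ≤ ∑' j, f j * g j := by
    rw [value]
    refine le_trans (norm_tsum_le_tsum_norm ?_) (le_of_eq (tsum_congr hterm))
    exact hsumfg.congr (fun j => (hterm j).symm)
  have hsob : Real.sqrt (∑' j, f j ^ 2) = sobNorm k s (1/2) u := by
    rw [sobNorm, hf2]
  have hρ0 : 0 < lam ^ ((((m+1:ℕ):ℝ) - 1)/2 - s) := Real.rpow_pos_of_pos hlam0 _
  have hρsq : lam ^ ((m:ℝ) - 2*s) = (lam ^ ((((m+1:ℕ):ℝ) - 1)/2 - s)) ^ 2 := by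
    rw [sq, ← Real.rpow_add hlam0]
    congr 1
    push_cast
    ring
  have hgs : Real.sqrt (∑' j, g j ^ 2)
      ≤ Real.sqrt C₂ * lam ^ ((((m+1:ℕ):ℝ) - 1)/2 - s) := by
    have h1 : ∑' j, g j ^ 2 ≤ C₂ * (lam ^ ((((m+1:ℕ):ℝ) - 1)/2 - s)) ^ 2 := by
      rw [← hρsq]
      exact hg2tsum
    refine le_trans (Real.sqrt_le_sqrt h1) ?_
    rw [Real.sqrt_mul hC₂.le, Real.sqrt_sq hρ0.le]
  have hsobnn : 0 ≤ sobNorm k s (1/2) u := Real.sqrt_nonneg _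
  calc ‖value (LPproj k χ l u) α‖ ≤ ∑' j, f j * g j := hval
    _ ≤ Real.sqrt (∑' j, f j ^ 2) * Real.sqrt (∑' j, g j ^ 2) := hCS
    _ ≤ sobNorm k s (1/2) u * (Real.sqrt C₂ * lam ^ ((((m+1:ℕ):ℝ) - 1)/2 - s)) := by
        rw [hsob] at *
        exact mul_le_mul_of_nonneg_left hgs hsobnn
    _ = Real.sqrt C₂ * lam ^ ((((m+1:ℕ):ℝ) - 1)/2 - s) * sobNorm k s (1/2) u := by
        ring


end
end

section
/- Commutator bound, L² version (Lemma 5.2, bound (com1)): Let s > (d+1)/2. There is a constant C, depending on d, s and k, such that for every f ∈ H^{s,1/2}(𝕋^d) and every trigonometric polynomial u on 𝕋^d, ‖f·P[∂_α u] − P[f·∂_α u]‖_{L²(𝕋^d)} ≤ C ‖f‖_{H^{s,1/2}} ‖u‖_{L²(𝕋^d)}; consequently the commutator [f,P]∂_α extends to a bounded operator on L²(𝕋^d) with operator norm at most C‖f‖_{H^{s,1/2}}. -/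
noncomputable section
open scoped BigOperators
open Filter

variable {d : ℕ}

/-! On the Fourier side the commutator `f·P[∂_α u] − P[f·∂_α u]` has coefficients
`Σₙ f̂(j−n) · i⟨n,k⟩ û(n) · (p(⟨n,k⟩) − p(⟨j,k⟩))`, where `p` is the symbol of `P`. Since `p` is
constant on each side of `0`, `|⟨n,k⟩| · |p(⟨n,k⟩) − p(⟨j,k⟩)| ≤ |⟨j−n,k⟩|`, so the commutator is
dominated by the convolution of `g = |⟨·,k⟩| |f̂|` with `|û|`, and Young's inequality
`ℓ¹ ∗ ℓ² ⊆ ℓ²` bounds its `L²` norm by `‖g‖_{ℓ¹} ‖u‖_{L²}`. Cauchy–Schwarz against the weight of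
`H^{s,1/2}` gives `‖g‖_{ℓ¹}² ≤ |k| Σⱼ ⟨j⟩^{1−2s} · ‖f‖²_{H^{s,1/2}}`, and the series converges
because `2s − 1 > d`. -/

def projSymbol (x : ℝ) : ℝ := if x < 0 then 1 else if x = 0 then 1 / 2 else 0

lemma Pp_apply (k : Fin d → ℝ) (w : Coeffs d) (j : Freq d) :
    Pp k w j = (projSymbol (dotk k j) : ℂ) * w j := by
  simp only [Pp, projSymbol]
  split_ifs <;> push_cast <;> ring

lemma abs_mul_abs_projSymbol_sub_le (a b : ℝ) :
    |a| * |projSymbol a - projSymbol b| ≤ |b - a| := by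
  unfold projSymbol
  split_ifs <;> norm_num <;> cases abs_cases a <;> cases abs_cases (b - a) <;> linarith

lemma dotk_sub (k : Fin d → ℝ) (j n : Freq d) : dotk k (j - n) = dotk k j - dotk k n := by
  simp only [dotk, Pi.sub_apply, Int.cast_sub, sub_mul, Finset.sum_sub_distrib]

lemma jb_pos (j : Freq d) : 0 < jb j := Real.sqrt_pos.mpr (by positivity)

lemma abs_dotk_le (k : Fin d → ℝ) (j : Freq d) : |dotk k j| ≤ √(∑ i, k i ^ 2) * jb j := by
  rw [jb, ← Real.sqrt_mul (by positivity)]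
  apply Real.abs_le_sqrt
  calc dotk k j ^ 2 ≤ (∑ i, k i ^ 2) * ∑ i, (j i : ℝ) ^ 2 := by
        simpa only [dotk, mul_comm] using
          Finset.sum_mul_sq_le_sq_mul_sq Finset.univ k fun i => (j i : ℝ)
    _ ≤ (∑ i, k i ^ 2) * (1 + ∑ i, (j i : ℝ) ^ 2) := by gcongr; linarith

lemma dotk_sq_div_wt_le (k : Fin d → ℝ) (s : ℝ) (j : Freq d) :
    dotk k j ^ 2 / wt k s (1 / 2) j ≤ √(∑ i, k i ^ 2) * jb j ^ (1 - 2 * s) := by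
  have hjb := jb_pos j
  have hroot : |dotk k j| ≤ √(1 + dotk k j ^ 2) :=
    Real.abs_le_sqrt (by linarith)
  rw [wt, ← Real.sqrt_eq_rpow, Real.rpow_sub hjb, Real.rpow_one, div_le_iff₀ (by positivity)]
  calc dotk k j ^ 2 = |dotk k j| * |dotk k j| := by rw [abs_mul_abs_self, sq]
    _ ≤ (√(∑ i, k i ^ 2) * jb j) * √(1 + dotk k j ^ 2) :=
        mul_le_mul (abs_dotk_le k j) hroot (abs_nonneg _) (by positivity)
    _ = _ := by field_simp

lemma summable_one_add_sq_rpow_neg {r : ℝ} (hr : 1 < 2 * r) :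
    Summable fun n : ℤ => (1 + (n : ℝ) ^ 2) ^ (-r) := by
  refine (Real.summable_abs_int_rpow hr).of_norm_bounded_eventually ?_
  filter_upwards [eventually_cofinite_ne 0] with n hn
  have hn' : (0 : ℝ) < (n : ℝ) ^ 2 := by positivity
  rw [Real.norm_of_nonneg (by positivity), neg_mul_eq_mul_neg, Real.rpow_mul (abs_nonneg _),
    Real.rpow_two, sq_abs]
  exact Real.rpow_le_rpow_of_nonpos hn' (by linarith) (by linarith)

lemma summable_fin_pi_prod {α : Type*} {c : α → ℝ} (hc0 : ∀ x, 0 ≤ c x) (hc : Summable c)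
    (n : ℕ) : Summable fun x : Fin n → α => ∏ i, c (x i) := by
  induction n with
  | zero => exact .of_finite
  | succ m ih =>
    rw [← (Fin.consEquiv fun _ => α).summable_iff]
    refine (hc.mul_of_nonneg ih hc0 fun x => Finset.prod_nonneg fun i _ => hc0 _).congr
      fun p => ?_
    simp [Fin.consEquiv, Fin.prod_univ_succ]

lemma prod_one_add_sq_le_jb_pow (j : Freq d) : ∏ i, (1 + (j i : ℝ) ^ 2) ≤ (jb j ^ 2) ^ d := by
  rw [jb, Real.sq_sqrt (by positivity)]
  calc ∏ i, (1 + (j i : ℝ) ^ 2) ≤ ∏ _i : Fin d, (1 + ∑ i, (j i : ℝ) ^ 2) :=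
      Finset.prod_le_prod (fun i _ => by positivity) fun i _ => by
        gcongr
        exact Finset.single_le_sum (fun i _ => sq_nonneg (j i : ℝ)) (Finset.mem_univ i)
    _ = _ := by simp

lemma summable_jb_rpow_neg {t : ℝ} (ht : (d : ℝ) < t) :
    Summable fun j : Freq d => jb j ^ (-t) := by
  rcases Nat.eq_zero_or_pos d with rfl | hd
  · exact .of_finite
  have hd' : (0 : ℝ) < d := by exact_mod_cast hd
  set r := t / (2 * d) with hr_def
  have hr : 1 < 2 * r := by
    rw [hr_def, show 2 * (t / (2 * d)) = t / d by field_simp, lt_div_iff₀ hd']; linarith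
  refine (summable_fin_pi_prod (fun n => by positivity) (summable_one_add_sq_rpow_neg hr) d
    ).of_nonneg_of_le (fun j => (Real.rpow_pos_of_pos (jb_pos j) _).le) fun j => ?_
  have hjb : jb j ^ (-t) = ((jb j ^ 2) ^ d) ^ (-r) := by
    rw [← Real.rpow_natCast, ← Real.rpow_natCast, ← Real.rpow_mul (jb_pos j).le,
      ← Real.rpow_mul (jb_pos j).le, hr_def]
    congr 1; push_cast; field_simp
  rw [Real.finsetProd_rpow _ _ (fun i _ => by positivity), hjb]
  exact Real.rpow_le_rpow_of_nonpos (Finset.prod_pos fun i _ => by positivity)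
    (prod_one_add_sq_le_jb_pow j) (by linarith)

lemma summable_and_tsum_abs_mul_le {ι : Type*} {c w x : ι → ℝ} (hw : ∀ i, 0 < w i)
    (hx : ∀ i, 0 ≤ x i) (hc : Summable fun i => c i ^ 2 / w i)
    (hwx : Summable fun i => w i * x i ^ 2) :
    Summable (fun i => |c i| * x i) ∧
      ∑' i, |c i| * x i ≤ √(∑' i, c i ^ 2 / w i) * √(∑' i, w i * x i ^ 2) := by
  have hsplit : ∀ i, |c i| * x i = |c i| / √(w i) * (√(w i) * x i) := fun i => by
    field_simp [(Real.sqrt_pos.mpr (hw i)).ne']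
  have hc2 : ∀ i, (|c i| / √(w i)) ^ (2 : ℝ) = c i ^ 2 / w i := fun i => by
    rw [Real.rpow_two, div_pow, sq_abs, Real.sq_sqrt (hw i).le]
  have hwx2 : ∀ i, (√(w i) * x i) ^ (2 : ℝ) = w i * x i ^ 2 := fun i => by
    rw [Real.rpow_two, mul_pow, Real.sq_sqrt (hw i).le]
  have := Real.summable_and_inner_le_Lp_mul_Lq_tsum_of_nonneg Real.HolderConjugate.two_two
    (fun i => div_nonneg (abs_nonneg (c i)) (Real.sqrt_nonneg (w i)))
    (fun i => mul_nonneg (Real.sqrt_nonneg (w i)) (hx i))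
    (by simpa only [hc2] using hc) (by simpa only [hwx2] using hwx)
  simp only [hc2, hwx2, ← hsplit, ← Real.sqrt_eq_rpow] at this
  exact this

lemma summable_and_tsum_abs_dotk_mul_norm_le {k : Fin d → ℝ} {s : ℝ}
    (hs : ((d : ℝ) + 1) / 2 < s) {f : Coeffs d} (hf : MemSob k s (1 / 2) f) :
    Summable (fun m => |dotk k m| * ‖f m‖) ∧
      ∑' m, |dotk k m| * ‖f m‖ ≤
        √(√(∑ i, k i ^ 2) * ∑' j : Freq d, jb j ^ (1 - 2 * s)) * sobNorm k s (1 / 2) f := by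
  have hwt : ∀ m, 0 < wt k s (1 / 2) m := fun m =>
    mul_pos (Real.rpow_pos_of_pos (jb_pos m) _) (Real.rpow_pos_of_pos (by positivity) _)
  have hjb : Summable fun j : Freq d => jb j ^ (1 - 2 * s) := by
    simpa using summable_jb_rpow_neg (t := 2 * s - 1) (by linarith)
  have hdom : Summable fun m => dotk k m ^ 2 / wt k s (1 / 2) m :=
    (hjb.mul_left _).of_nonneg_of_le (fun m => div_nonneg (sq_nonneg _) (hwt m).le)
      (dotk_sq_div_wt_le k s)
  obtain ⟨hsum, hle⟩ := summable_and_tsum_abs_mul_le hwt (fun m => norm_nonneg (f m)) hdom hf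
  refine ⟨hsum, hle.trans <|
    mul_le_mul_of_nonneg_right (Real.sqrt_le_sqrt ?_) (Real.sqrt_nonneg _)⟩
  rw [← tsum_mul_left]
  exact hdom.tsum_le_tsum (dotk_sq_div_wt_le k s) (hjb.mul_left _)

lemma summable_and_tsum_sq_le_of_norm_le_conv {G E : Type*} [AddCommGroup G]
    [SeminormedAddCommGroup E] {g : G → ℝ} (hg0 : ∀ m, 0 ≤ g m) (hg : Summable g)
    (S : Finset G) (v : G → ℝ) {w : G → E}
    (hw : ∀ j, ‖w j‖ ≤ ∑ n ∈ S, g (j - n) * v n) :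
    Summable (fun j => ‖w j‖ ^ 2) ∧
      ∑' j, ‖w j‖ ^ 2 ≤ (∑' m, g m) ^ 2 * ∑ n ∈ S, v n ^ 2 := by
  have hshift : ∀ n, Summable fun j => g (j - n) := fun n =>
    (Equiv.subRight n).summable_iff.mpr hg
  have hsum_le : ∀ j, ∑ n ∈ S, g (j - n) ≤ ∑' m, g m := fun j => by
    classical
    rw [← Finset.sum_image fun x _ y _ h => sub_right_injective h]
    exact hg.sum_le_tsum _ fun m _ => hg0 m
  have hpt : ∀ j, ‖w j‖ ^ 2 ≤ (∑' m, g m) * ∑ n ∈ S, g (j - n) * v n ^ 2 := fun j =>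
    calc ‖w j‖ ^ 2 ≤ (∑ n ∈ S, g (j - n) * v n) ^ 2 :=
          pow_le_pow_left₀ (norm_nonneg _) (hw j) 2
      _ ≤ (∑ n ∈ S, g (j - n)) * ∑ n ∈ S, g (j - n) * v n ^ 2 :=
        Finset.sum_sq_le_sum_mul_sum_of_sq_le_mul S (fun n _ => hg0 _)
          (fun n _ => mul_nonneg (hg0 _) (sq_nonneg _)) fun n _ => le_of_eq (by ring)
      _ ≤ _ := mul_le_mul_of_nonneg_right (hsum_le j)
          (Finset.sum_nonneg fun n _ => mul_nonneg (hg0 _) (sq_nonneg _))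
  have hconv : Summable fun j => ∑ n ∈ S, g (j - n) * v n ^ 2 :=
    summable_sum fun n _ => (hshift n).mul_right _
  have htsum : ∑' j, ∑ n ∈ S, g (j - n) * v n ^ 2 = (∑' m, g m) * ∑ n ∈ S, v n ^ 2 := by
    rw [Summable.tsum_finsetSum fun n _ => (hshift n).mul_right _, Finset.mul_sum]
    exact Finset.sum_congr rfl fun n _ => by
      rw [tsum_mul_right, ← (Equiv.subRight n).tsum_eq g]; rfl
  have hsq : Summable fun j => ‖w j‖ ^ 2 :=
    (hconv.mul_left _).of_nonneg_of_le (fun j => sq_nonneg _) hpt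
  refine ⟨hsq, ?_⟩
  calc ∑' j, ‖w j‖ ^ 2 ≤ ∑' j, (∑' m, g m) * ∑ n ∈ S, g (j - n) * v n ^ 2 :=
        hsq.tsum_le_tsum hpt (hconv.mul_left _)
    _ = (∑' m, g m) ^ 2 * ∑ n ∈ S, v n ^ 2 := by rw [tsum_mul_left, htsum]; ring

lemma cmul_apply_eq_sum (f v : Coeffs d) {S : Finset (Freq d)} (hS : ∀ n ∉ S, v n = 0)
    (j : Freq d) : cmul f v j = ∑ n ∈ S, f (j - n) * v n := by
  rw [cmul, ← (Equiv.subLeft j).tsum_eq]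
  simp only [Equiv.subLeft_apply, sub_sub_cancel]
  exact tsum_eq_sum fun n hn => by rw [hS n hn, mul_zero]

lemma commutator_apply (k : Fin d → ℝ) (f u : Coeffs d) {S : Finset (Freq d)}
    (hS : ∀ n ∉ S, u n = 0) (j : Freq d) :
    (cmul f (Pp k (dAl k u)) - Pp k (cmul f (dAl k u))) j =
      ∑ n ∈ S, f (j - n) * dAl k u n *
        ((projSymbol (dotk k n) - projSymbol (dotk k j) : ℝ) : ℂ) := by
  have hdAl : ∀ n ∉ S, dAl k u n = 0 := fun n hn => by simp [dAl, hS n hn]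
  have hPdAl : ∀ n ∉ S, Pp k (dAl k u) n = 0 := fun n hn => by
    rw [Pp_apply, hdAl n hn, mul_zero]
  rw [Pi.sub_apply, cmul_apply_eq_sum f _ hPdAl, Pp_apply, cmul_apply_eq_sum f _ hdAl,
    Finset.mul_sum, ← Finset.sum_sub_distrib]
  refine Finset.sum_congr rfl fun n _ => ?_
  rw [Pp_apply]
  push_cast
  ring

lemma norm_commutator_apply_le (k : Fin d → ℝ) (f u : Coeffs d) {S : Finset (Freq d)}
    (hS : ∀ n ∉ S, u n = 0) (j : Freq d) :
    ‖(cmul f (Pp k (dAl k u)) - Pp k (cmul f (dAl k u))) j‖ ≤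
      ∑ n ∈ S, |dotk k (j - n)| * ‖f (j - n)‖ * ‖u n‖ := by
  rw [commutator_apply k f u hS j]
  refine (norm_sum_le _ _).trans (Finset.sum_le_sum fun n _ => ?_)
  have hsymb := abs_mul_abs_projSymbol_sub_le (dotk k n) (dotk k j)
  rw [← dotk_sub] at hsymb
  simp only [dAl, norm_mul, Complex.norm_I, Complex.norm_real, Real.norm_eq_abs, one_mul]
  calc _ = |dotk k n| * |projSymbol (dotk k n) - projSymbol (dotk k j)| *
          (‖f (j - n)‖ * ‖u n‖) := by ring
    _ ≤ |dotk k (j - n)| * (‖f (j - n)‖ * ‖u n‖) := by gcongr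
    _ = _ := by ring

lemma HsNorm_zero (u : Coeffs d) : HsNorm 0 u = √(∑' j, ‖u j‖ ^ 2) := by
  simp [HsNorm]

lemma HsNorm_zero_commutator_le (k : Fin d → ℝ) (f u : Coeffs d)
    (hg : Summable fun m => |dotk k m| * ‖f m‖) (hu : u.support.Finite) :
    HsNorm 0 (cmul f (Pp k (dAl k u)) - Pp k (cmul f (dAl k u))) ≤
      (∑' m, |dotk k m| * ‖f m‖) * HsNorm 0 u := by
  have hS : ∀ n ∉ hu.toFinset, u n = 0 := fun n hn => by simpa using hn
  obtain ⟨-, hle⟩ := summable_and_tsum_sq_le_of_norm_le_conv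
    (fun m => by positivity) hg hu.toFinset (‖u ·‖) (norm_commutator_apply_le k f u hS)
  have hu2 : ∑' j, ‖u j‖ ^ 2 = ∑ n ∈ hu.toFinset, ‖u n‖ ^ 2 :=
    tsum_eq_sum fun n hn => by simp [hS n hn]
  calc HsNorm 0 _
      ≤ √((∑' m, |dotk k m| * ‖f m‖) ^ 2 * ∑ n ∈ hu.toFinset, ‖u n‖ ^ 2) := by
        rw [HsNorm_zero]; exact Real.sqrt_le_sqrt hle
    _ = _ := by
        rw [Real.sqrt_mul (sq_nonneg _), Real.sqrt_sq (tsum_nonneg fun m => by positivity),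
          HsNorm_zero, hu2]

theorem commutator_L2_general
    (d : ℕ) (k : Fin d → ℝ)
    (s : ℝ) (hs : ((d : ℝ) + 1) / 2 < s) :
    ∃ C : ℝ, 0 < C ∧
      ∀ f u : Coeffs d, MemSob k s (1/2) f → (Function.support u).Finite →
        HsNorm 0 (cmul f (Pp k (dAl k u)) - Pp k (cmul f (dAl k u)))
          ≤ C * sobNorm k s (1/2) f * HsNorm 0 u := by
  set C₀ := √(√(∑ i, k i ^ 2) * ∑' j : Freq d, jb j ^ (1 - 2 * s))
  refine ⟨C₀ + 1, by positivity, fun f u hf hu => ?_⟩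
  obtain ⟨hg, hG⟩ := summable_and_tsum_abs_dotk_mul_norm_le hs hf
  have hsob : 0 ≤ sobNorm k s (1 / 2) f := Real.sqrt_nonneg _
  calc _ ≤ (∑' m, |dotk k m| * ‖f m‖) * HsNorm 0 u :=
        HsNorm_zero_commutator_le k f u hg hu
    _ ≤ (C₀ + 1) * sobNorm k s (1 / 2) f * HsNorm 0 u := by
        gcongr
        · exact Real.sqrt_nonneg _
        · linarith

/-- **Lemma 5.2, bound (com1) (Commutator bound, `L²` version).** Let `s > (d+1)/2`.
There is a constant `C = C(d,s,k)` such that for every `f ∈ H^{s,1/2}(𝕋^d)` and every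
trigonometric polynomial `u` on `𝕋^d`,
`‖f·P[∂_α u] − P[f·∂_α u]‖_{L²} ≤ C ‖f‖_{H^{s,1/2}} ‖u‖_{L²}`;
consequently `[f,P]∂_α` extends to a bounded operator on `L²(𝕋^d)`. -/
theorem commutator_L2
    (d : ℕ) (hd : 1 ≤ d) (k : Fin d → ℝ) (hk : Indep k)
    (s : ℝ) (hs : ((d : ℝ) + 1) / 2 < s) :
    ∃ C : ℝ, 0 < C ∧
      ∀ f u : Coeffs d, MemSob k s (1/2) f → (Function.support u).Finite →
        HsNorm 0 (cmul f (Pp k (dAl k u)) - Pp k (cmul f (dAl k u)))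
          ≤ C * sobNorm k s (1/2) f * HsNorm 0 u :=
  commutator_L2_general d k s hs

end
end
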